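/- arXiv:0807.0744 — 5 statements merged into one kernel-verified Lean document; each statement's English description precedes it below -/
import Mathlib

section
/- Let Q = ℝ^d and let R₁ : ℝ^d × ℝ^d → [0,∞) be continuous with R₁(q,·) a norm on ℝ^d for every q, let d be the induced Finsler distance, assumed complete, let T > 0, let E ∈ C¹([0,T] × ℝ^d; ℝ), and let R̂(q,v) := R₁(q,v) if R₁(q,v) ≤ 1 and R̂(q,v) := +∞ otherwise. Then an absolutely continuous curve (t̂,q̂) : [0,S] → [0,T] × ℝ^d satisfies, for some m ∈ L¹(0,S) with m(s) > 0 for a.e. s, the system { 0 ∈ ∂_v R̂(q̂(s), q̂'(s)/m(s)) + D_qE(t̂(s),q̂(s)) and t̂'(s) + R₁(q̂(s),q̂'(s)) = m(s) } for a.e. s ∈ (0,S), if and only if there exists a function λ : (0,S) → (0,∞) such that for a.e. s ∈ (0,S): 0 ∈ λ(s) ∂_v R₁(q̂(s),q̂'(s)) + D_qE(t̂(s),q̂(s)), t̂'(s) ≥ 0, λ(s) ≥ 1, (λ(s)−1) t̂'(s) = 0, and t̂'(s) + R₁(q̂(s),q̂'(s)) > 0. Here ∂_v denotes the convex subdifferential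 with respect to the second (velocity) variable. -/
open MeasureTheory Filter Set Function
open scoped Topology ENNReal RealInnerProductSpace

noncomputable section

/-- `y` is absolutely continuous on `[a,b]` with (a.e.) derivative `y'`:
it is the integral of the integrable function `y'`. -/
structure IsACOn {W : Type*} [NormedAddCommGroup W] [NormedSpace ℝ W]
    (a b : ℝ) (y : ℝ → W) (y' : ℝ → W) : Prop where
  intg : IntervalIntegrable y' volume a b
  eq : ∀ t ∈ Set.Icc a b, y t = y a + ∫ s in a..t, y' s

/-- A continuous Finsler dissipation: `R1 q ·` is a norm for every `q`. -/
structure IsFinsler {V : Type*} [NormedAddCommGroup V] [NormedSpace ℝ V]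
    (R1 : V → V → ℝ) : Prop where
  cont : Continuous fun p : V × V => R1 p.1 p.2
  nonneg : ∀ q v, 0 ≤ R1 q v
  eq_zero_iff : ∀ q v, R1 q v = 0 ↔ v = 0
  smul : ∀ (q : V) (c : ℝ) (v : V), R1 q (c • v) = |c| * R1 q v
  triangle : ∀ q u v, R1 q (u + v) ≤ R1 q u + R1 q v

/-- The Finsler distance induced by the dissipation `R1`. -/
def finslerDist {V : Type*} [NormedAddCommGroup V] [NormedSpace ℝ V]
    (R1 : V → V → ℝ) (q0 q1 : V) : ℝ :=
  sInf {L | ∃ y y' : ℝ → V, IsACOn 0 1 y y' ∧ y 0 = q0 ∧ y 1 = q1 ∧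
    L = ∫ s in (0:ℝ)..1, R1 (y s) (y' s)}

/-- Completeness of the space w.r.t. a distance function `dF`. -/
def IsCompleteD {V : Type*} (dF : V → V → ℝ) : Prop :=
  ∀ u : ℕ → V, (∀ ε > 0, ∃ N, ∀ m ≥ N, ∀ n ≥ N, dF (u m) (u n) < ε) →
    ∃ x : V, Filter.Tendsto (fun k => dF (u k) x) Filter.atTop (𝓝 0)

/-- `E` is a `C¹` energy with partial time derivative `Et` and spatial gradient `DqE`. -/
structure IsC1Energy {V : Type*} [NormedAddCommGroup V] [InnerProductSpace ℝ V]
    [CompleteSpace V] (E Et : ℝ → V → ℝ) (DqE : ℝ → V → V) : Prop where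
  contE : Continuous fun p : ℝ × V => E p.1 p.2
  contEt : Continuous fun p : ℝ × V => Et p.1 p.2
  contDqE : Continuous fun p : ℝ × V => DqE p.1 p.2
  hasDerivT : ∀ t q, HasDerivAt (fun τ => E τ q) (Et t q) t
  hasGrad : ∀ t q, HasGradientAt (fun x => E t x) (DqE t q) q

/-- The local slope `|∂E|(t,q) = sup_{v ≠ 0} ⟨D_qE(t,q), v⟩ / R₁(q,v)`. -/
def localSlope {V : Type*} [NormedAddCommGroup V] [InnerProductSpace ℝ V]
    (R1 : V → V → ℝ) (DqE : ℝ → V → V) (t : ℝ) (q : V) : ℝ :=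
  sSup {r | ∃ v : V, v ≠ 0 ∧ r = (inner ℝ (DqE t q) v : ℝ) / R1 q v}

/-- The limit function `M₀` (with values in `EReal`). -/
def M0 (a v x : ℝ) : EReal :=
  if a = 0 then ((v + v * max (x - 1) 0 : ℝ) : EReal)
  else if x ≤ 1 then ((v : ℝ) : EReal) else ⊤

/-- The limit function `M₀` (with values in `ℝ≥0∞`). -/
def M0E (a v x : ℝ) : ℝ≥0∞ :=
  if a = 0 then ENNReal.ofReal (v + v * max (x - 1) 0)
  else if x ≤ 1 then ENNReal.ofReal v else ⊤

/-- The viscous functional `M_ε` (with values in `ℝ≥0∞`). -/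
def MepsE (ε a v x : ℝ) : ℝ≥0∞ :=
  if a = 0 then (if v = 0 then 0 else ⊤)
  else ENNReal.ofReal (v + ε / (2 * a) * v ^ 2 + a / (2 * ε) * (max (x - 1) 0) ^ 2)

/-- Convex subdifferential of a real-valued function. -/
def subdiff {V : Type*} [NormedAddCommGroup V] [InnerProductSpace ℝ V]
    (f : V → ℝ) (v : V) : Set V :=
  {w | ∀ u, f v + (inner ℝ w (u - v) : ℝ) ≤ f u}

/-- Convex subdifferential of an extended-real-valued function. -/
def subdiffE {V : Type*} [NormedAddCommGroup V] [InnerProductSpace ℝ V]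
    (f : V → EReal) (v : V) : Set V :=
  {w | ∀ u, f v + (((inner ℝ w (u - v) : ℝ) : ℝ) : EReal) ≤ f u}

/-- `R̂(q,v) = R₁(q,v)` if `R₁(q,v) ≤ 1`, `+∞` otherwise. -/
def Rhat {V : Type*} (R1 : V → V → ℝ) (q v : V) : EReal :=
  if R1 q v ≤ 1 then ((R1 q v : ℝ) : EReal) else ⊤

/-- A parametrized metric solution of the rate-independent system `(ℝ^d, d, E)`. -/
structure IsParamSol {V : Type*} [NormedAddCommGroup V] [InnerProductSpace ℝ V]
    [CompleteSpace V]
    (R1 : V → V → ℝ) (E Et : ℝ → V → ℝ) (DqE : ℝ → V → V) (T s₀ s₁ : ℝ)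
    (th th' : ℝ → ℝ) (qh qh' : ℝ → V) : Prop where
  acT : IsACOn s₀ s₁ th th'
  acQ : IsACOn s₀ s₁ qh qh'
  maps : ∀ s ∈ Set.Icc s₀ s₁, th s ∈ Set.Icc 0 T
  mono : MonotoneOn th (Set.Icc s₀ s₁)
  nondeg : ∀ᵐ s ∂volume, s ∈ Set.Ioo s₀ s₁ → 0 < th' s + R1 (qh s) (qh' s)
  evi : ∀ᵐ s ∂volume, s ∈ Set.Ioo s₀ s₁ →
    ((deriv (fun r => E (th r) (qh r)) s - Et (th s) (qh s) * th' s : ℝ) : EReal)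
      ≤ -(M0 (th' s) (R1 (qh s) (qh' s)) (localSlope R1 DqE (th s) (qh s)))

/-- A solution of the viscous `ψ_ε`-gradient system. -/
structure IsViscousSol {V : Type*} [NormedAddCommGroup V] [InnerProductSpace ℝ V]
    [CompleteSpace V]
    (R1 : V → V → ℝ) (E Et : ℝ → V → ℝ) (DqE : ℝ → V → V) (T ε : ℝ)
    (q q' : ℝ → V) : Prop where
  ac : IsACOn 0 T q q'
  evi : ∀ᵐ t ∂volume, t ∈ Set.Ioo 0 T →
    deriv (fun τ => E τ (q τ)) t ≤ Et t (q t)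
      - (R1 (q t) (q' t) + ε / 2 * (R1 (q t) (q' t)) ^ 2)
      - (max (localSlope R1 DqE t (q t) - 1) 0) ^ 2 / (2 * ε)

/-- Total variation of `q` on the set `I`, w.r.t. the distance function `dF`. -/
def varWith {Y : Type*} (dF : Y → Y → ℝ) (q : ℝ → Y) (I : Set ℝ) : ℝ≥0∞ :=
  ⨆ p : ℕ × {u : ℕ → ℝ // Monotone u ∧ ∀ i, u i ∈ I},
    ∑ i ∈ Finset.range p.1, ENNReal.ofReal (dF (q (p.2.1 i)) (q (p.2.1 (i + 1))))

/-- Left limit of a curve at `t`, with the convention `q(0⁻) = q(0)`. -/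
def llim {Y : Type*} [TopologicalSpace Y] (q : ℝ → Y) (t : ℝ) : Y :=
  if t ≤ 0 then q t else Function.leftLim q t

/-- Right limit of a curve at `t`, with the convention `q(T⁺) = q(T)`. -/
def rlim {Y : Type*} [TopologicalSpace Y] (T : ℝ) (q : ℝ → Y) (t : ℝ) : Y :=
  if T ≤ t then q t else Function.rightLim q t

/-- Continuity set of a curve `q : [0,T] → Y`. -/
def contSet {Y : Type*} [TopologicalSpace Y] (T : ℝ) (q : ℝ → Y) : Set ℝ :=
  {t | t ∈ Set.Icc 0 T ∧ llim q t = q t ∧ rlim T q t = q t}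

/-- Jump set of a curve `q : [0,T] → Y`. -/
def jumpSet {Y : Type*} [TopologicalSpace Y] (T : ℝ) (q : ℝ → Y) : Set ℝ :=
  Set.Icc 0 T \ contSet T q

/-- The (clamped) variation function `t ↦ Var(q, [0, min(t,T)])`, real-valued. -/
def vFun {Y : Type*} (dF : Y → Y → ℝ) (T : ℝ) (q : ℝ → Y) (t : ℝ) : ℝ :=
  (varWith dF q (Set.Icc 0 (min t T))).toReal

/-- `μ` is the Lebesgue–Stieltjes measure (distributional derivative) of the
variation function of `q` w.r.t. the distance `dF`. -/
def IsVarMeasure {Y : Type*} (dF : Y → Y → ℝ) (T : ℝ) (q : ℝ → Y)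
    (μ : Measure ℝ) : Prop :=
  ∀ a b : ℝ, a ≤ b → μ (Set.Ioc a b) =
    ENNReal.ofReal (Function.rightLim (vFun dF T q) b - Function.rightLim (vFun dF T q) a)

/-- Metric derivative of a curve in a (pseudo-)metric space. -/
def mderiv {Y : Type*} [PseudoMetricSpace Y] (y : ℝ → Y) (s : ℝ) : ℝ :=
  Filter.limsup (fun h : ℝ => dist (y (s + h)) (y s) / |h|) (𝓝[≠] (0 : ℝ))

/-- The slope distance `S_α(t; q₀, q₁)`. -/
def slopeDist {V : Type*} [NormedAddCommGroup V] [InnerProductSpace ℝ V]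
    (R1 : V → V → ℝ) (DqE : ℝ → V → V) (α t : ℝ) (q0 q1 : V) : ℝ :=
  sInf {r | ∃ y y' : ℝ → V, IsACOn 0 1 y y' ∧ y 0 = q0 ∧ y 1 = q1 ∧
    r = ∫ s in (0:ℝ)..1, max (localSlope R1 DqE t (y s)) α * R1 (y s) (y' s)}

/-- The dissipation functional `Σ₀(q, [t₀,t₁])`. -/
def Sigma0 {V : Type*} [NormedAddCommGroup V] [InnerProductSpace ℝ V]
    (R1 : V → V → ℝ) (DqE : ℝ → V → V) (T : ℝ) (q : ℝ → V) (μ : Measure ℝ)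
    (t₀ t₁ : ℝ) : ℝ≥0∞ :=
  (∫⁻ r in Set.Ioo t₀ t₁, ENNReal.ofReal (localSlope R1 DqE r (q r))
      ∂(μ.restrict (contSet T q)))
  + ENNReal.ofReal (slopeDist R1 DqE 0 t₀ (q t₀) (rlim T q t₀))
  + ENNReal.ofReal (slopeDist R1 DqE 0 t₁ (llim q t₁) (q t₁))
  + ∑' t : ↥(jumpSet T q ∩ Set.Ioo t₀ t₁),
      (ENNReal.ofReal (slopeDist R1 DqE 0 t (llim q t) (q t))
       + ENNReal.ofReal (slopeDist R1 DqE 0 t (q t) (rlim T q t)))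

/-- The functional `Γ(q,[t₀,t₁])`. -/
def GammaFn {V : Type*} [NormedAddCommGroup V] [InnerProductSpace ℝ V]
    (R1 : V → V → ℝ) (DqE : ℝ → V → V) (E : ℝ → V → ℝ) (T : ℝ) (q : ℝ → V)
    (μ : Measure ℝ) (t₀ t₁ : ℝ) : ℝ≥0∞ :=
  (∫⁻ r in Set.Ioo t₀ t₁, ENNReal.ofReal (localSlope R1 DqE r (q r))
      ∂(μ.restrict (contSet T q)))
  + ENNReal.ofReal (|E t₀ (q t₀) - E t₀ (rlim T q t₀)|)
  + ENNReal.ofReal (|E t₁ (llim q t₁) - E t₁ (q t₁)|)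
  + ∑' t : ↥(jumpSet T q ∩ Set.Ioo t₀ t₁),
      (ENNReal.ofReal (|E (↑t) (q t) - E (↑t) (rlim T q t)|)
       + ENNReal.ofReal (|E (↑t) (llim q t) - E (↑t) (q t)|))

/-- The dissipation functional `Σ₁(q, [t₀,t₁])`. -/
def Sigma1 {V : Type*} [NormedAddCommGroup V] [InnerProductSpace ℝ V]
    (R1 : V → V → ℝ) (DqE : ℝ → V → V) (T : ℝ) (q : ℝ → V) (μ : Measure ℝ)
    (t₀ t₁ : ℝ) : ℝ≥0∞ :=
  (∫⁻ r in Set.Ioo t₀ t₁, ENNReal.ofReal (max (localSlope R1 DqE r (q r)) 1)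
      ∂(μ.restrict (contSet T q)))
  + (∫⁻ r in Set.Ioo t₀ t₁, ENNReal.ofReal (localSlope R1 DqE r (q r) - 1))
  + ENNReal.ofReal (slopeDist R1 DqE 1 t₀ (q t₀) (rlim T q t₀))
  + ENNReal.ofReal (slopeDist R1 DqE 1 t₁ (llim q t₁) (q t₁))
  + ∑' t : ↥(jumpSet T q ∩ Set.Ioo t₀ t₁),
      (ENNReal.ofReal (slopeDist R1 DqE 1 t (llim q t) (q t))
       + ENNReal.ofReal (slopeDist R1 DqE 1 t (q t) (rlim T q t)))

/-- A BV solution of the rate-independent system `(ℝ^d, d, E)`, where `μ` is the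
variation measure of `q`. -/
structure IsBVSol {V : Type*} [NormedAddCommGroup V] [InnerProductSpace ℝ V]
    (R1 : V → V → ℝ) (E Et : ℝ → V → ℝ) (DqE : ℝ → V → V) (T : ℝ) (q : ℝ → V)
    (μ : Measure ℝ) : Prop where
  en : ∀ t₀ t₁ : ℝ, 0 ≤ t₀ → t₀ < t₁ → t₁ ≤ T →
    ((E t₁ (q t₁) - E t₀ (q t₀) - ∫ t in t₀..t₁, Et t (q t) : ℝ) : EReal)
      ≤ -((Sigma0 R1 DqE T q μ t₀ t₁ : ℝ≥0∞) : EReal)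
  locstab : ∀ t ∈ Set.Icc 0 T \ jumpSet T q, localSlope R1 DqE t (q t) ≤ 1
  suppstab : ∀ t : ℝ, (∀ ε > 0, μ (Set.Ioo (t - ε) (t + ε)) ≠ 0) →
    1 ≤ localSlope R1 DqE t (q t)
  jump : ∀ t ∈ jumpSet T q, ∃ (y y' : ℝ → V) (θt : ℝ),
    IsACOn 0 1 y y' ∧ y 0 = llim q t ∧ y 1 = rlim T q t ∧ θt ∈ Set.Icc (0:ℝ) 1 ∧
    y θt = q t ∧ (∀ θ ∈ Set.Icc (0:ℝ) 1, 1 ≤ localSlope R1 DqE t (y θ)) ∧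
    E t (rlim T q t) - E t (llim q t)
      = -∫ θ in (0:ℝ)..1, localSlope R1 DqE t (y θ) * R1 (y θ) (y' θ)

/-- An energetic solution of the rate-independent system `(ℝ^d, d, E)`. -/
def IsEnergeticSol {V : Type*} [NormedAddCommGroup V] [InnerProductSpace ℝ V]
    (R1 : V → V → ℝ) (E Et : ℝ → V → ℝ) (T : ℝ) (q : ℝ → V) : Prop :=
  ∀ t ∈ Set.Icc (0:ℝ) T,
    (∀ p, E t (q t) ≤ E t p + finslerDist R1 (q t) p) ∧
    E t (q t) + (varWith (finslerDist R1) q (Set.Icc 0 t)).toReal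
      = E 0 (q 0) + ∫ s in (0:ℝ)..t, Et s (q s)

/-- The global slope of `E(t,·)` at `q`, w.r.t. the distance `dF`. -/
def gSlopeD {V : Type*} (dF : V → V → ℝ) (E : ℝ → V → ℝ) (t : ℝ) (q : V) : ℝ≥0∞ :=
  ⨆ (v : V) (_ : v ≠ q), ENNReal.ofReal (max (E t q - E t v) 0 / dF q v)

end

variable {d : ℕ}

/-! `R̂(q, ·)` is `R₁(q, ·)` plus the indicator of its unit ball. Hence `ξ ∈ ∂R̂(q, v)` with
`v = q'/m` means that `v` lies in the unit ball and `λ⁻¹ ξ ∈ ∂R₁(q, v) = ∂R₁(q, q')` for the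
multiplier `λ = max(⟨ξ, v⟩, 1)`, where `λ > 1` forces the constraint to be active,
`R₁(q, v) = 1`; since `1 - R₁(q, v) = t'/m`, this is exactly the complementarity `(λ - 1) t' = 0`.
Conversely `m = t' + R₁(q, q')` is integrable because `R₁(p, ·) ≤ C ‖·‖` uniformly for `p` in
the compact range of `q`. -/

theorem IsACOn.continuousOn {W : Type*} [NormedAddCommGroup W] [NormedSpace ℝ W] {a b : ℝ}
    {y y' : ℝ → W} (hy : IsACOn a b y y') : ContinuousOn y (Icc a b) :=
  (continuousOn_const.add ((intervalIntegral.continuousOn_primitive_interval' hy.intg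
    left_mem_uIcc).mono Icc_subset_uIcc)).congr hy.eq

namespace IsFinsler

variable {V : Type*} [NormedAddCommGroup V] [InnerProductSpace ℝ V]
  {R1 : V → V → ℝ} {q v w ξ : V}

theorem R1_zero (hF : IsFinsler R1) (q : V) : R1 q 0 = 0 :=
  (hF.eq_zero_iff q 0).mpr rfl

theorem R1_smul_of_pos (hF : IsFinsler R1) (q : V) {c : ℝ} (hc : 0 < c) (v : V) :
    R1 q (c • v) = c * R1 q v := by
  rw [hF.smul, abs_of_pos hc]

theorem mem_subdiff_iff (hF : IsFinsler R1) :
    w ∈ subdiff (R1 q) v ↔ (∀ u, ⟪w, u⟫ ≤ R1 q u) ∧ R1 q v ≤ ⟪w, v⟫ := by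
  constructor
  · intro hw
    refine ⟨fun u => ?_, ?_⟩
    · have h := hw (v + u)
      rw [add_sub_cancel_left] at h
      linarith [hF.triangle q v u]
    · have h := hw 0
      rw [zero_sub, inner_neg_right, hF.R1_zero] at h
      linarith
  · rintro ⟨hdual, hattain⟩ u
    rw [inner_sub_right]
    linarith [hdual u]

theorem mem_subdiff_smul_iff (hF : IsFinsler R1) {c : ℝ} (hc : 0 < c) :
    w ∈ subdiff (R1 q) (c • v) ↔ w ∈ subdiff (R1 q) v := by
  rw [hF.mem_subdiff_iff, hF.mem_subdiff_iff, hF.R1_smul_of_pos q hc, real_inner_smul_right,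
    mul_le_mul_iff_of_pos_left hc]

theorem mem_subdiffE_Rhat_iff (hF : IsFinsler R1) :
    ξ ∈ subdiffE (Rhat R1 q) v ↔
      R1 q v ≤ 1 ∧ ∀ u, R1 q u ≤ 1 → R1 q v + ⟪ξ, u - v⟫ ≤ R1 q u := by
  have h0 : R1 q 0 ≤ 1 := by rw [hF.R1_zero]; exact zero_le_one
  constructor
  · intro hξ
    have hv : R1 q v ≤ 1 := by
      by_contra hv
      have h := hξ 0
      simp only [Rhat, if_neg hv, if_pos h0, EReal.top_add_coe] at h
      exact EReal.coe_ne_top _ (top_le_iff.mp h)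
    refine ⟨hv, fun u hu => ?_⟩
    have h := hξ u
    simp only [Rhat, if_pos hv, if_pos hu] at h
    exact_mod_cast h
  · rintro ⟨hv, hball⟩ u
    simp only [Rhat, if_pos hv]
    split_ifs with hu
    · exact_mod_cast hball u hu
    · exact le_top

theorem inner_le_mul_of_forall_R1_eq_one (hF : IsFinsler R1) {c : ℝ}
    (h : ∀ u, R1 q u = 1 → ⟪ξ, u⟫ ≤ c) (u : V) : ⟪ξ, u⟫ ≤ c * R1 q u := by
  rcases (hF.nonneg q u).eq_or_lt with hu | hu
  · rw [(hF.eq_zero_iff q u).mp hu.symm, inner_zero_right, hF.R1_zero, mul_zero]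
  · have hunit := h ((R1 q u)⁻¹ • u)
      (by rw [hF.R1_smul_of_pos q (inv_pos.mpr hu), inv_mul_cancel₀ hu.ne'])
    rw [real_inner_smul_right, inv_mul_le_iff₀ hu] at hunit
    linarith

theorem inner_le_of_mem_subdiffE_Rhat (hF : IsFinsler R1) (hξ : ξ ∈ subdiffE (Rhat R1 q) v)
    (u : V) : ⟪ξ, u⟫ ≤ (1 - R1 q v + ⟪ξ, v⟫) * R1 q u := by
  obtain ⟨-, hball⟩ := hF.mem_subdiffE_Rhat_iff.mp hξ
  refine hF.inner_le_mul_of_forall_R1_eq_one (fun u hu => ?_) u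
  have h := hball u hu.le
  rw [inner_sub_right] at h
  linarith

/-- Inside the open unit ball the constraint `R₁ ≤ 1` is inactive, so small perturbations of `v`
in every direction are admissible. -/
theorem inner_le_of_mem_subdiffE_Rhat_of_lt_one (hF : IsFinsler R1)
    (hξ : ξ ∈ subdiffE (Rhat R1 q) v) (hv : R1 q v < 1) (u : V) : ⟪ξ, u⟫ ≤ R1 q u := by
  obtain ⟨-, hball⟩ := hF.mem_subdiffE_Rhat_iff.mp hξ
  have hu := hF.nonneg q u
  set t : ℝ := (1 - R1 q v) / (R1 q u + 1)
  have ht : 0 < t := div_pos (by linarith) (by linarith)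
  have hts : t * (R1 q u + 1) = 1 - R1 q v := div_mul_cancel₀ _ (by linarith)
  have htriangle := hF.triangle q v (t • u)
  rw [hF.R1_smul_of_pos q ht] at htriangle
  have h := hball (v + t • u) (by nlinarith)
  rw [add_sub_cancel_left, real_inner_smul_right] at h
  nlinarith

theorem inv_smul_mem_subdiff_of_mem_subdiffE_Rhat (hF : IsFinsler R1)
    (hξ : ξ ∈ subdiffE (Rhat R1 q) v) :
    (max ⟪ξ, v⟫ 1)⁻¹ • ξ ∈ subdiff (R1 q) v ∧ (max ⟪ξ, v⟫ 1 - 1) * (1 - R1 q v) = 0 := by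
  obtain ⟨hv, hball⟩ := hF.mem_subdiffE_Rhat_iff.mp hξ
  have hattain : R1 q v ≤ ⟪ξ, v⟫ := by
    have h := hball 0 (by rw [hF.R1_zero]; exact zero_le_one)
    rw [zero_sub, inner_neg_right, hF.R1_zero] at h
    linarith
  rcases hv.lt_or_eq with hlt | heq
  · have hdual := hF.inner_le_of_mem_subdiffE_Rhat_of_lt_one hξ hlt
    rw [max_eq_right (by linarith [hdual v]), inv_one, one_smul, sub_self, zero_mul]
    exact ⟨hF.mem_subdiff_iff.mpr ⟨hdual, hattain⟩, rfl⟩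
  · have hdual := hF.inner_le_of_mem_subdiffE_Rhat hξ
    rw [heq, sub_self, zero_add] at hdual
    have hpos : 0 < ⟪ξ, v⟫ := by linarith
    rw [max_eq_left (by linarith), heq, sub_self, mul_zero]
    refine ⟨hF.mem_subdiff_iff.mpr ⟨fun u => ?_, ?_⟩, rfl⟩
    · rw [real_inner_smul_left, inv_mul_le_iff₀ hpos]
      exact hdual u
    · rw [real_inner_smul_left, heq, inv_mul_cancel₀ hpos.ne']

theorem smul_mem_subdiffE_Rhat (hF : IsFinsler R1) (hw : w ∈ subdiff (R1 q) v)
    (hv : R1 q v ≤ 1) {lam : ℝ} (hlam : 1 ≤ lam) (hcompl : (lam - 1) * (1 - R1 q v) = 0) :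
    lam • w ∈ subdiffE (Rhat R1 q) v := by
  obtain ⟨hdual, hattain⟩ := hF.mem_subdiff_iff.mp hw
  refine hF.mem_subdiffE_Rhat_iff.mpr ⟨hv, fun u hu => ?_⟩
  have hwv : ⟪w, v⟫ = R1 q v := le_antisymm (hdual v) hattain
  rw [real_inner_smul_left, inner_sub_right, hwv]
  nlinarith [hdual u]

theorem R1_inv_smul_eq (hF : IsFinsler R1) (q q' : V) {t' : ℝ} (hm : 0 < t' + R1 q q') :
    R1 q ((t' + R1 q q')⁻¹ • q') = 1 - t' / (t' + R1 q q') := by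
  rw [hF.R1_smul_of_pos q (inv_pos.mpr hm)]
  field_simp
  ring

theorem multiplier_of_mem_subdiffE_Rhat (hF : IsFinsler R1) {q' g : V} {t' : ℝ}
    (hm : 0 < t' + R1 q q')
    (hg : -g ∈ subdiffE (Rhat R1 q) ((t' + R1 q q')⁻¹ • q')) :
    (∃ w ∈ subdiff (R1 q) q', max ⟪-g, (t' + R1 q q')⁻¹ • q'⟫ 1 • w + g = 0) ∧
      0 ≤ t' ∧ 1 ≤ max ⟪-g, (t' + R1 q q')⁻¹ • q'⟫ 1 ∧
      (max ⟪-g, (t' + R1 q q')⁻¹ • q'⟫ 1 - 1) * t' = 0 := by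
  set lam := max ⟪-g, (t' + R1 q q')⁻¹ • q'⟫ 1
  have hlam : 0 < lam := zero_lt_one.trans_le (le_max_right _ _)
  obtain ⟨hw, hcompl⟩ := hF.inv_smul_mem_subdiff_of_mem_subdiffE_Rhat hg
  have hv := (hF.mem_subdiffE_Rhat_iff.mp hg).1
  rw [hF.R1_inv_smul_eq q q' hm, sub_le_self_iff] at hv
  rw [hF.R1_inv_smul_eq q q' hm, sub_sub_cancel] at hcompl
  refine ⟨⟨lam⁻¹ • -g, (hF.mem_subdiff_smul_iff (inv_pos.mpr hm)).mp hw, ?_⟩,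
    zero_mul (t' + R1 q q') ▸ (le_div_iff₀ hm).mp hv, le_max_right _ _, ?_⟩
  · rw [smul_smul, mul_inv_cancel₀ hlam.ne', one_smul, neg_add_cancel]
  · rwa [mul_div_assoc', div_eq_zero_iff, or_iff_left hm.ne'] at hcompl

theorem mem_subdiffE_Rhat_of_multiplier (hF : IsFinsler R1) {q' g : V} {t' lam : ℝ}
    (hw : w ∈ subdiff (R1 q) q') (hg : lam • w + g = 0) (ht' : 0 ≤ t') (hlam : 1 ≤ lam)
    (hcompl : (lam - 1) * t' = 0) (hm : 0 < t' + R1 q q') :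
    -g ∈ subdiffE (Rhat R1 q) ((t' + R1 q q')⁻¹ • q') := by
  rw [neg_eq_of_add_eq_zero_left hg]
  refine hF.smul_mem_subdiffE_Rhat ((hF.mem_subdiff_smul_iff (inv_pos.mpr hm)).mpr hw) ?_ hlam ?_
  · rw [hF.R1_inv_smul_eq q q' hm, sub_le_self_iff]
    positivity
  · rw [hF.R1_inv_smul_eq q q' hm, sub_sub_cancel, mul_div_assoc', hcompl, zero_div]

theorem exists_bound_of_isCompact [ProperSpace V] (hF : IsFinsler R1) {K : Set V}
    (hK : IsCompact K) : ∃ C, ∀ p ∈ K, ∀ v, R1 p v ≤ C * ‖v‖ := by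
  obtain ⟨C, hC⟩ := (hK.prod (isCompact_closedBall (0 : V) 1)).exists_bound_of_continuousOn
    hF.cont.continuousOn
  refine ⟨C, fun p hp v => ?_⟩
  rcases eq_or_ne v 0 with rfl | hv
  · rw [hF.R1_zero, norm_zero, mul_zero]
  have hnv : 0 < ‖v‖ := norm_pos_iff.mpr hv
  have hunit : ‖v‖⁻¹ • v ∈ Metric.closedBall (0 : V) 1 := by
    rw [mem_closedBall_zero_iff, norm_smul, norm_inv, norm_norm, inv_mul_cancel₀ hnv.ne']
  have h : R1 p (‖v‖⁻¹ • v) ≤ C := (le_abs_self _).trans (hC (p, ‖v‖⁻¹ • v) ⟨hp, hunit⟩)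
  rw [hF.R1_smul_of_pos p (inv_pos.mpr hnv), inv_mul_le_iff₀ hnv] at h
  linarith

theorem integrableOn_Ioc [ProperSpace V] (hF : IsFinsler R1) {μ : Measure ℝ} {a b : ℝ}
    {y y' : ℝ → V} (hy : ContinuousOn y (Icc a b)) (hy' : IntegrableOn y' (Ioc a b) μ) :
    IntegrableOn (fun s => R1 (y s) (y' s)) (Ioc a b) μ := by
  obtain ⟨C, hC⟩ := hF.exists_bound_of_isCompact (isCompact_Icc.image_of_continuousOn hy)
  have hmeas : AEStronglyMeasurable (fun s => R1 (y s) (y' s)) (μ.restrict (Ioc a b)) :=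
    hF.cont.comp_aestronglyMeasurable
      (((hy.mono Ioc_subset_Icc_self).aestronglyMeasurable measurableSet_Ioc).prodMk
        hy'.aestronglyMeasurable)
  refine Integrable.mono' (hy'.norm.const_mul C) hmeas ?_
  filter_upwards [ae_restrict_mem measurableSet_Ioc] with s hs
  rw [Real.norm_eq_abs, abs_of_nonneg (hF.nonneg _ _)]
  exact hC _ (mem_image_of_mem y (Ioc_subset_Icc_self hs)) _

end IsFinsler

theorem statement0_general (S : ℝ)
    (R1 : EuclideanSpace ℝ (Fin d) → EuclideanSpace ℝ (Fin d) → ℝ)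
    (hR : IsFinsler R1)
    (DqE : ℝ → EuclideanSpace ℝ (Fin d) → EuclideanSpace ℝ (Fin d))
    (th th' : ℝ → ℝ) (qh qh' : ℝ → EuclideanSpace ℝ (Fin d))
    (hACt : IsACOn 0 S th th') (hACq : IsACOn 0 S qh qh') :
    (∃ m : ℝ → ℝ, IntegrableOn m (Set.Ioo 0 S) ∧
        (∀ᵐ s ∂volume, s ∈ Set.Ioo 0 S → 0 < m s) ∧
        (∀ᵐ s ∂volume, s ∈ Set.Ioo 0 S →
          (-(DqE (th s) (qh s)) ∈ subdiffE (fun v => Rhat R1 (qh s) v) ((m s)⁻¹ • qh' s) ∧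
           th' s + R1 (qh s) (qh' s) = m s)))
    ↔ (∃ lam : ℝ → ℝ, (∀ s ∈ Set.Ioo (0:ℝ) S, 0 < lam s) ∧
        (∀ᵐ s ∂volume, s ∈ Set.Ioo 0 S →
          ((∃ w ∈ subdiff (fun v => R1 (qh s) v) (qh' s),
              lam s • w + DqE (th s) (qh s) = 0) ∧
           0 ≤ th' s ∧ 1 ≤ lam s ∧ (lam s - 1) * th' s = 0 ∧
           0 < th' s + R1 (qh s) (qh' s)))) := by
  constructor
  · rintro ⟨m, -, hmpos, hae⟩
    refine ⟨fun s => max ⟪-DqE (th s) (qh s), (m s)⁻¹ • qh' s⟫ 1,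
      fun s _ => zero_lt_one.trans_le (le_max_right _ _), ?_⟩
    filter_upwards [hmpos, hae] with s hpos h hs
    obtain ⟨hg, hm⟩ := h hs
    rw [← hm] at hg hpos ⊢
    obtain ⟨hw, ht', hlam, hcompl⟩ := hR.multiplier_of_mem_subdiffE_Rhat (hpos hs) hg
    exact ⟨hw, ht', hlam, hcompl, hpos hs⟩
  · rintro ⟨lam, -, hae⟩
    refine ⟨fun s => th' s + R1 (qh s) (qh' s), ?_, ?_, ?_⟩
    · exact (hACt.intg.1.add (hR.integrableOn_Ioc hACq.continuousOn hACq.intg.1)).mono_set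
        Ioo_subset_Ioc_self
    · filter_upwards [hae] with s h hs
      exact (h hs).2.2.2.2
    · filter_upwards [hae] with s h hs
      obtain ⟨⟨w, hw, hg⟩, ht', hlam, hcompl, hm⟩ := h hs
      exact ⟨hR.mem_subdiffE_Rhat_of_multiplier hw hg ht' hlam hcompl hm, rfl⟩

theorem statement0 (T S : ℝ) (hT : 0 < T) (hS : 0 < S)
    (R1 : EuclideanSpace ℝ (Fin d) → EuclideanSpace ℝ (Fin d) → ℝ)
    (hR : IsFinsler R1) (hcomp : IsCompleteD (finslerDist R1))
    (E Et : ℝ → EuclideanSpace ℝ (Fin d) → ℝ)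
    (DqE : ℝ → EuclideanSpace ℝ (Fin d) → EuclideanSpace ℝ (Fin d))
    (hE : IsC1Energy E Et DqE)
    (th th' : ℝ → ℝ) (qh qh' : ℝ → EuclideanSpace ℝ (Fin d))
    (hACt : IsACOn 0 S th th') (hACq : IsACOn 0 S qh qh')
    (hmap : ∀ s ∈ Set.Icc (0:ℝ) S, th s ∈ Set.Icc 0 T) :
    (∃ m : ℝ → ℝ, IntegrableOn m (Set.Ioo 0 S) ∧
        (∀ᵐ s ∂volume, s ∈ Set.Ioo 0 S → 0 < m s) ∧
        (∀ᵐ s ∂volume, s ∈ Set.Ioo 0 S →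
          (-(DqE (th s) (qh s)) ∈ subdiffE (fun v => Rhat R1 (qh s) v) ((m s)⁻¹ • qh' s) ∧
           th' s + R1 (qh s) (qh' s) = m s)))
    ↔ (∃ lam : ℝ → ℝ, (∀ s ∈ Set.Ioo (0:ℝ) S, 0 < lam s) ∧
        (∀ᵐ s ∂volume, s ∈ Set.Ioo 0 S →
          ((∃ w ∈ subdiff (fun v => R1 (qh s) v) (qh' s),
              lam s • w + DqE (th s) (qh s) = 0) ∧
           0 ≤ th' s ∧ 1 ≤ lam s ∧ (lam s - 1) * th' s = 0 ∧
           0 < th' s + R1 (qh s) (qh' s)))) :=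
  statement0_general S R1 hR DqE th th' qh qh' hACt hACq
end

section
/- Let Q = ℝ^d with a continuous Finsler dissipation R₁ (each R₁(q,·) a norm), induced complete Finsler distance d, and E ∈ C¹([0,T] × ℝ^d; ℝ). Then for every (t,q) ∈ [0,T] × ℝ^d the local slope equals the metric slope: sup { ⟨D_qE(t,q), v⟩ / R₁(q,v) : v ∈ ℝ^d, v ≠ 0 } = limsup_{q̃ → q} (E(t,q) − E(t,q̃))⁺ / d(q,q̃), where (·)⁺ denotes the positive part and the limsup is taken with respect to the distance d. -/
open MeasureTheory Filter Set Function
open scoped Topology ENNReal RealInnerProductSpace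

/-!
Near `q` the norms `R1 x` are uniformly comparable with `R1 q` and `DqE t x` is close to
`DqE t q`. Moving from `q` along the ray `q - h v` costs Finsler distance `≈ h R1 q v` and lowers
the energy by `≈ h ⟪DqE t q, v⟫`, which gives `≤` between the local and the metric slope.
Conversely, a nearly optimal path from `q` to a `d`-close point `p` stays in a small ball, and
integrating `-⟪DqE t q, y'⟫ ≤ |∂E| R1 q y'` along it bounds `E(q) - E(p)` by
`(|∂E| + o(1)) d(q, p)`, which gives `≥`.
-/

section Homogeneous

variable {V : Type*} [NormedAddCommGroup V] [NormedSpace ℝ V]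

theorem le_of_forall_mem_sphere {A B : V → ℝ} (hA : ∀ (t : ℝ) v, 0 ≤ t → A (t • v) = t * A v)
    (hB : ∀ (t : ℝ) v, 0 ≤ t → B (t • v) = t * B v)
    (h : ∀ u ∈ Metric.sphere (0 : V) 1, A u ≤ B u) (v : V) : A v ≤ B v := by
  rcases eq_or_ne v 0 with rfl | hv
  · have hA0 := hA 0 0 le_rfl
    have hB0 := hB 0 0 le_rfl
    simp only [zero_smul, zero_mul] at hA0 hB0
    rw [hA0, hB0]
  · have hu : ‖v‖⁻¹ • v ∈ Metric.sphere (0 : V) 1 := by simp [norm_smul, hv]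
    rw [← smul_inv_smul₀ (norm_ne_zero_iff.2 hv) v, hA _ _ (norm_nonneg v),
      hB _ _ (norm_nonneg v)]
    exact mul_le_mul_of_nonneg_left (h _ hu) (norm_nonneg v)

end Homogeneous

namespace IsFinsler

variable {V : Type*} [NormedAddCommGroup V] [NormedSpace ℝ V] {R1 : V → V → ℝ}

theorem map_zero (hR : IsFinsler R1) (x : V) : R1 x 0 = 0 :=
  (hR.eq_zero_iff x 0).2 rfl

theorem map_neg (hR : IsFinsler R1) (x v : V) : R1 x (-v) = R1 x v := by
  simpa using hR.smul x (-1) v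

theorem pos (hR : IsFinsler R1) (x : V) {v : V} (hv : v ≠ 0) : 0 < R1 x v :=
  (hR.nonneg x v).lt_of_ne' (mt (hR.eq_zero_iff x v).1 hv)

theorem smul_of_nonneg (hR : IsFinsler R1) (x : V) {t : ℝ} (ht : 0 ≤ t) (v : V) :
    R1 x (t • v) = t * R1 x v := by
  rw [hR.smul, abs_of_nonneg ht]

variable [FiniteDimensional ℝ V]

theorem exists_pos_mul_norm_le (hR : IsFinsler R1) (q : V) :
    ∃ c > 0, ∀ v, c * ‖v‖ ≤ R1 q v := by
  have hnorm : ∀ c (t : ℝ) (v : V), 0 ≤ t → c * ‖t • v‖ = t * (c * ‖v‖) := fun c t v ht => by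
    rw [norm_smul_of_nonneg ht]; ring
  rcases (Metric.sphere (0 : V) 1).eq_empty_or_nonempty with h | h
  · exact ⟨1, one_pos, le_of_forall_mem_sphere (hnorm 1) (fun t v ht => hR.smul_of_nonneg q ht v)
      (by simp [h])⟩
  · obtain ⟨u₀, hu₀, hmin⟩ := (isCompact_sphere (0 : V) 1).exists_isMinOn h
      (hR.cont.comp (continuous_const.prodMk continuous_id)).continuousOn
    refine ⟨R1 q u₀, hR.pos q (Metric.ne_of_mem_sphere hu₀ one_ne_zero),
      le_of_forall_mem_sphere (hnorm _) (fun t v ht => hR.smul_of_nonneg q ht v) fun u hu => ?_⟩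
    simpa [mem_sphere_zero_iff_norm.1 hu] using hmin hu

theorem eventually_le_mul (hR : IsFinsler R1) (q : V) {k : ℝ} (hk : 1 < k) :
    ∀ᶠ x in 𝓝 q, ∀ v, R1 q v ≤ k * R1 x v := by
  have hsphere : ∀ᶠ x in 𝓝 q, ∀ u ∈ Metric.sphere (0 : V) 1, R1 q u < k * R1 x u := by
    refine (isCompact_sphere 0 1).eventually_forall_of_forall_eventually fun u hu => ?_
    have hopen : IsOpen {z : V × V | R1 q z.2 < k * R1 z.1 z.2} :=
      isOpen_lt (hR.cont.comp (continuous_const.prodMk continuous_snd))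
        (continuous_const.mul hR.cont)
    refine hopen.mem_nhds ?_
    have := hR.pos q (Metric.ne_of_mem_sphere hu one_ne_zero)
    change R1 q u < k * R1 q u
    nlinarith
  filter_upwards [hsphere] with x hx
  exact le_of_forall_mem_sphere (fun t v ht => hR.smul_of_nonneg q ht v)
    (fun t v ht => by rw [hR.smul_of_nonneg x ht v]; ring) fun u hu => (hx u hu).le

theorem exists_eventually_mul_norm_le (hR : IsFinsler R1) (q : V) :
    ∃ c > 0, ∀ᶠ x in 𝓝 q, ∀ v, c * ‖v‖ ≤ R1 x v := by
  obtain ⟨c, hc, hcq⟩ := hR.exists_pos_mul_norm_le q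
  refine ⟨c / 2, by positivity, ?_⟩
  filter_upwards [hR.eventually_le_mul q one_lt_two] with x hx v
  linarith [hcq v, hx v]

theorem exists_le_mul_norm_of_isCompact (hR : IsFinsler R1) {K : Set V} (hK : IsCompact K) :
    ∃ C, ∀ x ∈ K, ∀ v, R1 x v ≤ C * ‖v‖ := by
  obtain ⟨C, hC⟩ := (hK.prod (isCompact_sphere (0 : V) 1)).exists_bound_of_continuousOn
    hR.cont.continuousOn
  refine ⟨C, fun x hx => le_of_forall_mem_sphere (fun t v ht => hR.smul_of_nonneg x ht v)
    (fun t v ht => by rw [norm_smul_of_nonneg ht]; ring) fun u hu => ?_⟩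
  have hxu : |R1 x u| ≤ C := hC (x, u) ⟨hx, hu⟩
  simpa [mem_sphere_zero_iff_norm.1 hu] using (le_abs_self _).trans hxu

end IsFinsler

namespace IsACOn

variable {V : Type*} [NormedAddCommGroup V] [NormedSpace ℝ V] {a b : ℝ} {y y' : ℝ → V}

theorem integral_eq_sub (h : IsACOn a b y y') {τ : ℝ} (hτ : τ ∈ Icc a b) :
    ∫ s in a..τ, y' s = y τ - y a := by
  rw [h.eq τ hτ]; abel

theorem mono (h : IsACOn a b y y') {τ : ℝ} (hτ : τ ∈ Icc a b) : IsACOn a τ y y' :=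
  ⟨h.intg.mono_set (uIcc_subset_uIcc_left (Icc_subset_uIcc hτ)),
    fun s hs => h.eq s ⟨hs.1, hs.2.trans hτ.2⟩⟩

theorem continuousOn_s1 (h : IsACOn a b y y') : ContinuousOn y (Icc a b) :=
  ((continuousOn_const.add (intervalIntegral.continuousOn_primitive_interval
    ((intervalIntegrable_iff' (μ := volume)).1 h.intg))).mono Icc_subset_uIcc).congr
    fun s hs => h.eq s hs

variable {R1 : V → V → ℝ}

theorem intervalIntegrable_finsler [FiniteDimensional ℝ V] (hR : IsFinsler R1)
    (h : IsACOn a b y y') (hab : a ≤ b) :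
    IntervalIntegrable (fun s => R1 (y s) (y' s)) volume a b := by
  obtain ⟨C, hC⟩ := hR.exists_le_mul_norm_of_isCompact
    (isCompact_Icc.image_of_continuousOn h.continuousOn_s1)
  have hy' := (intervalIntegrable_iff_integrableOn_Ioc_of_le hab).1 h.intg
  rw [intervalIntegrable_iff_integrableOn_Ioc_of_le hab]
  refine (hy'.norm.const_mul C).mono' (hR.cont.comp_aestronglyMeasurable
    (((h.continuousOn_s1.mono Ioc_subset_Icc_self).aestronglyMeasurable measurableSet_Ioc).prodMk
      hy'.aestronglyMeasurable)) ?_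
  filter_upwards [ae_restrict_mem measurableSet_Ioc] with s hs
  rw [Real.norm_of_nonneg (hR.nonneg _ _)]
  exact hC _ (mem_image_of_mem y (Ioc_subset_Icc_self hs)) _

theorem mul_norm_sub_le_integral [FiniteDimensional ℝ V] (hR : IsFinsler R1)
    (h : IsACOn a b y y') (hab : a ≤ b) {c : ℝ} (hc0 : 0 ≤ c)
    (hc : ∀ s ∈ Ioo a b, ∀ v, c * ‖v‖ ≤ R1 (y s) v) :
    c * ‖y b - y a‖ ≤ ∫ s in a..b, R1 (y s) (y' s) :=
  calc c * ‖y b - y a‖ = c * ‖∫ s in a..b, y' s‖ := by rw [h.integral_eq_sub ⟨hab, le_rfl⟩]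
    _ ≤ c * ∫ s in a..b, ‖y' s‖ := by
      gcongr; exact intervalIntegral.norm_integral_le_integral_norm hab
    _ = ∫ s in a..b, c * ‖y' s‖ := (intervalIntegral.integral_const_mul _ _).symm
    _ ≤ _ := intervalIntegral.integral_mono_on_of_le_Ioo hab (h.intg.norm.const_mul c)
      (h.intervalIntegrable_finsler hR hab) fun s hs => hc s hs _

theorem map_sub_le_mul_integral [FiniteDimensional ℝ V] (hR : IsFinsler R1)
    (h : IsACOn a b y y') (hab : a ≤ b) (φ : V →L[ℝ] ℝ) {M : ℝ}
    (hφ : ∀ s ∈ Icc a b, ∀ v, φ v ≤ M * R1 (y s) v) :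
    φ (y b - y a) ≤ M * ∫ s in a..b, R1 (y s) (y' s) := by
  rw [← h.integral_eq_sub ⟨hab, le_rfl⟩, ← φ.intervalIntegral_comp_comm h.intg,
    ← intervalIntegral.integral_const_mul]
  exact intervalIntegral.integral_mono_on hab
    ⟨φ.integrable_comp h.intg.1, φ.integrable_comp h.intg.2⟩
    ((h.intervalIntegrable_finsler hR hab).const_mul M) fun s hs => hφ s hs _

theorem mapsTo_closedBall [FiniteDimensional ℝ V] (hR : IsFinsler R1) (h : IsACOn 0 1 y y')
    {q : V} (hy0 : y 0 = q) {c ρ : ℝ} (hc0 : 0 ≤ c)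
    (hc : ∀ x ∈ Metric.closedBall q ρ, ∀ v, c * ‖v‖ ≤ R1 x v)
    (hlt : ∫ s in (0 : ℝ)..1, R1 (y s) (y' s) < c * ρ) :
    MapsTo y (Icc 0 1) (Metric.closedBall q ρ) := by
  intro s₀ hs₀
  by_contra hout
  rw [Metric.mem_closedBall, dist_eq_norm, not_le] at hout
  -- Up to the first time `sInf K` at distance `≥ ρ` from `q`, the bound `c ‖·‖ ≤ R1` applies.
  set K := Icc (0 : ℝ) 1 ∩ (fun s => ‖y s - q‖) ⁻¹' Ici ρ
  have hK : IsCompact K := isCompact_Icc.of_isClosed_subset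
    ((h.continuousOn_s1.sub continuousOn_const).norm.preimage_isClosed_of_isClosed isClosed_Icc
      isClosed_Ici) inter_subset_left
  have hτ : sInf K ∈ K := hK.sInf_mem ⟨s₀, hs₀, hout.le⟩
  have hbefore : ∀ s ∈ Ioo 0 (sInf K), y s ∈ Metric.closedBall q ρ := fun s hs => by
    by_contra hs'
    rw [Metric.mem_closedBall, dist_eq_norm, not_le] at hs'
    exact (csInf_le hK.bddBelow ⟨⟨hs.1.le, hs.2.le.trans hτ.1.2⟩, hs'.le⟩).not_gt hs.2
  have hlen := (h.mono hτ.1).mul_norm_sub_le_integral hR hτ.1.1 hc0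
    fun s hs v => hc _ (hbefore s hs) v
  have hmono : ∫ s in (0 : ℝ)..sInf K, R1 (y s) (y' s) ≤ ∫ s in (0 : ℝ)..1, R1 (y s) (y' s) :=
    intervalIntegral.integral_mono_interval le_rfl hτ.1.1 hτ.1.2
      (Eventually.of_forall fun s => hR.nonneg _ _) (h.intervalIntegrable_finsler hR zero_le_one)
  rw [hy0] at hlen
  exact lt_irrefl _
    (((mul_le_mul_of_nonneg_left hτ.2.out hc0).trans (hlen.trans hmono)).trans_lt hlt)

end IsACOn

section FinslerDist

variable {V : Type*} [NormedAddCommGroup V] [NormedSpace ℝ V] {R1 : V → V → ℝ}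

theorem finslerDist_le_integral (hR : IsFinsler R1) {y y' : ℝ → V} (h : IsACOn 0 1 y y') :
    finslerDist R1 (y 0) (y 1) ≤ ∫ s in (0 : ℝ)..1, R1 (y s) (y' s) :=
  csInf_le ⟨0, by
    rintro _ ⟨y, y', -, -, -, rfl⟩
    exact intervalIntegral.integral_nonneg zero_le_one fun _ _ => hR.nonneg _ _⟩
    ⟨y, y', h, rfl, rfl, rfl⟩

variable [CompleteSpace V]

theorem isACOn_segment (q₀ q₁ : V) :
    IsACOn 0 1 (fun s => q₀ + s • (q₁ - q₀)) (fun _ => q₁ - q₀) :=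
  ⟨intervalIntegrable_const, fun s _ => by simp [smul_sub]⟩

theorem le_finslerDist {q₀ q₁ : V} {r : ℝ}
    (hr : ∀ y y', IsACOn 0 1 y y' → y 0 = q₀ → y 1 = q₁ → r ≤ ∫ s in (0 : ℝ)..1, R1 (y s) (y' s)) :
    r ≤ finslerDist R1 q₀ q₁ :=
  le_csInf ⟨_, _, _, isACOn_segment q₀ q₁, by simp, by simp, rfl⟩
    (by rintro _ ⟨y, y', h, h0, h1, rfl⟩; exact hr y y' h h0 h1)

theorem finslerDist_nonneg (hR : IsFinsler R1) (q₀ q₁ : V) : 0 ≤ finslerDist R1 q₀ q₁ :=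
  le_finslerDist fun _ _ _ _ _ => intervalIntegral.integral_nonneg zero_le_one
    fun _ _ => hR.nonneg _ _

theorem exists_isACOn_integral_lt {q₀ q₁ : V} {r : ℝ} (hr : finslerDist R1 q₀ q₁ < r) :
    ∃ y y', IsACOn 0 1 y y' ∧ y 0 = q₀ ∧ y 1 = q₁ ∧ ∫ s in (0 : ℝ)..1, R1 (y s) (y' s) < r := by
  by_contra! hge
  exact (le_finslerDist fun y y' h h0 h1 => hge y y' h h0 h1).not_gt hr

theorem eventually_finslerDist_add_smul_le (hR : IsFinsler R1) (q v : V) {m : ℝ}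
    (hm : R1 q v < m) : ∀ᶠ h in 𝓝[>] (0 : ℝ), finslerDist R1 q (q + h • v) ≤ h * m := by
  obtain ⟨δ, hδ, hball⟩ := Metric.nhds_basis_closedBall.eventually_iff.1
    ((hR.cont.comp (continuous_id.prodMk continuous_const)).continuousAt.eventually_lt
      continuousAt_const hm)
  have hsmall : ∀ᶠ h in 𝓝[>] (0 : ℝ), h * ‖v‖ < δ :=
    nhdsWithin_le_nhds (((continuous_id.mul continuous_const).tendsto' 0 0 (by simp)).eventually
      (gt_mem_nhds hδ))
  filter_upwards [hsmall, self_mem_nhdsWithin] with h hh (hh0 : 0 < h)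
  have hseg := finslerDist_le_integral hR (isACOn_segment q (q + h • v))
  simp only [zero_smul, add_zero, one_smul, add_sub_cancel_left] at hseg
  refine hseg.trans ?_
  calc ∫ s in (0 : ℝ)..1, R1 (q + s • h • v) (h • v)
      ≤ ∫ _ in (0 : ℝ)..1, h * m := by
        refine intervalIntegral.integral_mono_on zero_le_one
          ((hR.cont.comp ((continuous_const.add (continuous_id.smul continuous_const)).prodMk
            continuous_const)).intervalIntegrable _ _) intervalIntegrable_const fun s hs => ?_
        rw [hR.smul_of_nonneg _ hh0.le]
        refine mul_le_mul_of_nonneg_left (hball ?_).le hh0.le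
        rw [Metric.mem_closedBall, dist_eq_norm, add_sub_cancel_left, norm_smul_of_nonneg hs.1,
          norm_smul_of_nonneg hh0.le]
        exact (mul_le_of_le_one_left (by positivity) hs.2).trans hh.le
    _ = h * m := by simp

end FinslerDist

section FinslerDistFiniteDimensional

variable {V : Type*} [NormedAddCommGroup V] [NormedSpace ℝ V] [FiniteDimensional ℝ V]
  {R1 : V → V → ℝ}

theorem mul_min_le_finslerDist (hR : IsFinsler R1) {q p : V} {c ρ : ℝ}
    (hc0 : 0 ≤ c) (hc : ∀ x ∈ Metric.closedBall q ρ, ∀ v, c * ‖v‖ ≤ R1 x v) :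
    c * min ‖p - q‖ ρ ≤ finslerDist R1 q p := by
  refine le_finslerDist fun y y' h h0 h1 => ?_
  by_cases hlt : ∫ s in (0 : ℝ)..1, R1 (y s) (y' s) < c * ρ
  · have hmaps := h.mapsTo_closedBall hR h0 hc0 hc hlt
    calc c * min ‖p - q‖ ρ ≤ c * ‖y 1 - y 0‖ := by
          rw [h0, h1]; exact mul_le_mul_of_nonneg_left (min_le_left _ _) hc0
      _ ≤ _ := h.mul_norm_sub_le_integral hR zero_le_one hc0
          fun s hs v => hc _ (hmaps (Ioo_subset_Icc_self hs)) v
  · exact (mul_le_mul_of_nonneg_left (min_le_right _ _) hc0).trans (not_lt.1 hlt)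

theorem finslerDist_pos (hR : IsFinsler R1) {q p : V} (hpq : p ≠ q) :
    0 < finslerDist R1 q p := by
  obtain ⟨c, hc, hev⟩ := hR.exists_eventually_mul_norm_le q
  obtain ⟨ρ, hρ, hball⟩ := Metric.nhds_basis_closedBall.eventually_iff.1 hev
  exact (mul_pos hc (lt_min (norm_pos_iff.2 (sub_ne_zero.2 hpq)) hρ)).trans_le
    (mul_min_le_finslerDist hR hc.le hball)

end FinslerDistFiniteDimensional

namespace IsC1Energy

variable {V : Type*} [NormedAddCommGroup V] [InnerProductSpace ℝ V] [CompleteSpace V]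
  {E Et : ℝ → V → ℝ} {DqE : ℝ → V → V}

theorem tendsto_slope_add_smul (hE : IsC1Energy E Et DqE) (t : ℝ) (q v : V) :
    Tendsto (fun h : ℝ => h⁻¹ * (E t (q + h • v) - E t q)) (𝓝[>] 0) (𝓝 ⟪DqE t q, v⟫) := by
  have hline : HasDerivAt (fun h : ℝ => q + h • v) v 0 := by
    simpa using ((hasDerivAt_id (0 : ℝ)).smul_const v).const_add q
  have hderiv := ((hE.hasGrad t q).hasFDerivAt.comp_hasDerivAt_of_eq 0 hline (by simp))
  simpa using hderiv.tendsto_slope_zero_right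

theorem sub_le_inner_add (hE : IsC1Energy E Et DqE) (t : ℝ) {s : Set V} (hs : Convex ℝ s)
    {q p : V} (hq : q ∈ s) (hp : p ∈ s) {η : ℝ} (hη : ∀ x ∈ s, ‖DqE t x - DqE t q‖ ≤ η) :
    E t q - E t p ≤ ⟪DqE t q, q - p⟫ + η * ‖q - p‖ := by
  have hderiv : ∀ x ∈ s, HasFDerivWithinAt (fun x => E t x - ⟪DqE t q, x⟫)
      (InnerProductSpace.toDual ℝ V (DqE t x - DqE t q)) s x := fun x _ => by
    rw [map_sub]
    exact ((hE.hasGrad t x).hasFDerivAt.sub (innerSL ℝ (DqE t q)).hasFDerivAt).hasFDerivWithinAt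
  have hmvt := hs.norm_image_sub_le_of_norm_hasFDerivWithin_le hderiv
    (fun x hx => by rw [LinearIsometryEquiv.norm_map]; exact hη x hx) hp hq
  rw [Real.norm_eq_abs] at hmvt
  rw [inner_sub_right]
  linarith [le_abs_self (E t q - ⟪DqE t q, q⟫ - (E t p - ⟪DqE t q, p⟫))]

theorem sub_le_mul_integral [FiniteDimensional ℝ V] {R1 : V → V → ℝ} (hE : IsC1Energy E Et DqE)
    (hR : IsFinsler R1) (t : ℝ) {q : V} {y y' : ℝ → V} (h : IsACOn 0 1 y y') (hy0 : y 0 = q)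
    {ρ c k η L : ℝ} (hc : 0 < c) (hL : 0 ≤ L) (hmaps : MapsTo y (Icc 0 1) (Metric.closedBall q ρ))
    (hgrad : ∀ x ∈ Metric.closedBall q ρ, ‖DqE t x - DqE t q‖ ≤ η)
    (hlow : ∀ x ∈ Metric.closedBall q ρ, ∀ v, c * ‖v‖ ≤ R1 x v)
    (hrel : ∀ x ∈ Metric.closedBall q ρ, ∀ v, R1 q v ≤ k * R1 x v)
    (hdual : ∀ v, ⟪DqE t q, v⟫ ≤ L * R1 q v) :
    E t q - E t (y 1) ≤ (L * k + η / c) * ∫ s in (0 : ℝ)..1, R1 (y s) (y' s) := by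
  have hq : q ∈ Metric.closedBall q ρ := hy0 ▸ hmaps ⟨le_rfl, zero_le_one⟩
  have hη : 0 ≤ η := (norm_nonneg _).trans (hgrad q hq)
  have henergy := hE.sub_le_inner_add t (convex_closedBall q ρ) hq (hmaps ⟨zero_le_one, le_rfl⟩)
    hgrad
  have hinner : ⟪DqE t q, q - y 1⟫ ≤ L * k * ∫ s in (0 : ℝ)..1, R1 (y s) (y' s) := by
    have := h.map_sub_le_mul_integral hR zero_le_one (-innerSL ℝ (DqE t q)) (M := L * k)
      fun s hs v => by
        have hv := hdual (-v)
        rw [inner_neg_right, hR.map_neg] at hv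
        simpa [mul_assoc] using hv.trans (mul_le_mul_of_nonneg_left (hrel _ (hmaps hs) v) hL)
    simpa [hy0, ← inner_neg_right] using this
  have hnorm : c * ‖q - y 1‖ ≤ ∫ s in (0 : ℝ)..1, R1 (y s) (y' s) := by
    simpa [hy0, norm_sub_rev] using h.mul_norm_sub_le_integral hR zero_le_one hc.le
      fun s hs v => hlow _ (hmaps (Ioo_subset_Icc_self hs)) v
  have hdiv : η * ‖q - y 1‖ ≤ η / c * ∫ s in (0 : ℝ)..1, R1 (y s) (y' s) := by
    rw [div_mul_eq_mul_div, le_div_iff₀ hc]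
    nlinarith
  linarith

end IsC1Energy

section LocalSlope

variable {V : Type*} [NormedAddCommGroup V] [InnerProductSpace ℝ V] {R1 : V → V → ℝ}
  {DqE : ℝ → V → V}

theorem localSlope_of_subsingleton [Subsingleton V] (t : ℝ) (q : V) :
    localSlope R1 DqE t q = 0 := by
  simp [localSlope, Subsingleton.elim _ (0 : V)]

theorem exists_lt_inner_div_of_lt_localSlope [Nontrivial V] {t a : ℝ} {q : V}
    (ha : a < localSlope R1 DqE t q) : ∃ v ≠ 0, a < ⟪DqE t q, v⟫ / R1 q v := by
  obtain ⟨v₀, hv₀⟩ := exists_ne (0 : V)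
  obtain ⟨_, ⟨v, hv, rfl⟩, hlt⟩ :=
    exists_lt_of_lt_csSup (s := {r | ∃ v : V, v ≠ 0 ∧ r = ⟪DqE t q, v⟫ / R1 q v})
      ⟨_, v₀, hv₀, rfl⟩ ha
  exact ⟨v, hv, hlt⟩

variable [FiniteDimensional ℝ V]

theorem inner_le_localSlope_mul (hR : IsFinsler R1) (t : ℝ) (q v : V) :
    ⟪DqE t q, v⟫ ≤ localSlope R1 DqE t q * R1 q v := by
  obtain ⟨c, hc, hcq⟩ := hR.exists_pos_mul_norm_le q
  have hbdd : BddAbove {r | ∃ v : V, v ≠ 0 ∧ r = ⟪DqE t q, v⟫ / R1 q v} := by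
    refine ⟨‖DqE t q‖ / c, ?_⟩
    rintro _ ⟨v, hv, rfl⟩
    rw [div_le_iff₀ (hR.pos q hv), div_mul_eq_mul_div, le_div_iff₀ hc]
    nlinarith [real_inner_le_norm (DqE t q) v, hcq v, norm_nonneg (DqE t q)]
  rcases eq_or_ne v 0 with rfl | hv
  · simp [hR.map_zero]
  · exact (div_le_iff₀ (hR.pos q hv)).1 (le_csSup hbdd ⟨v, hv, rfl⟩)

theorem localSlope_nonneg [Nontrivial V] (hR : IsFinsler R1) (t : ℝ) (q : V) :
    0 ≤ localSlope R1 DqE t q := by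
  obtain ⟨v, hv⟩ := exists_ne (0 : V)
  have h₁ := inner_le_localSlope_mul (DqE := DqE) hR t q v
  have h₂ := inner_le_localSlope_mul (DqE := DqE) hR t q (-v)
  rw [inner_neg_right, hR.map_neg] at h₂
  nlinarith [hR.pos q hv]

end LocalSlope

def puncturedNhdsWith {X : Type*} (D : X → X → ℝ) (q : X) : Filter X :=
  ⨅ ε ∈ Ioi (0 : ℝ), 𝓟 {p | D q p < ε ∧ p ≠ q}

theorem hasBasis_puncturedNhdsWith {X : Type*} (D : X → X → ℝ) (q : X) :
    (puncturedNhdsWith D q).HasBasis (fun ε => 0 < ε) fun ε => {p | D q p < ε ∧ p ≠ q} :=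
  hasBasis_biInf_principal
    (fun ε₁ h₁ ε₂ h₂ => ⟨min ε₁ ε₂, mem_Ioi.2 (lt_min h₁ h₂),
      fun _ hp => ⟨hp.1.trans_le (min_le_left _ _), hp.2⟩,
      fun _ hp => ⟨hp.1.trans_le (min_le_right _ _), hp.2⟩⟩)
    ⟨1, mem_Ioi.2 one_pos⟩

theorem limsup_eq_of_forall_eventually_le_of_forall_frequently_lt {α : Type*} {F : Filter α}
    {f : α → ℝ} {L : ℝ} (hle : ∀ a, L < a → ∀ᶠ x in F, f x ≤ a)
    (hlt : ∀ a < L, ∃ᶠ x in F, a < f x) : limsup f F = L := by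
  rw [limsup_eq]
  refine csInf_eq_of_forall_ge_of_forall_gt_exists_lt ⟨L + 1, hle _ (lt_add_one L)⟩
    (fun a ha => ?_) fun w hw => ⟨(L + w) / 2, hle _ (by linarith), by linarith⟩
  by_contra! haL
  obtain ⟨x, hax, hxa⟩ := ((hlt a haL).and_eventually ha).exists
  exact hax.not_ge hxa

section MetricSlope

variable {V : Type*} [NormedAddCommGroup V] [InnerProductSpace ℝ V] [FiniteDimensional ℝ V]
  [Nontrivial V] {R1 : V → V → ℝ} {E Et : ℝ → V → ℝ} {DqE : ℝ → V → V}

theorem eventually_slope_le_of_localSlope_lt (hR : IsFinsler R1) (hE : IsC1Energy E Et DqE)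
    {t a : ℝ} {q : V} (ha : localSlope R1 DqE t q < a) :
    ∀ᶠ p in puncturedNhdsWith (finslerDist R1) q,
      max (E t q - E t p) 0 / finslerDist R1 q p ≤ a := by
  set L := localSlope R1 DqE t q
  have hL : 0 ≤ L := localSlope_nonneg hR t q
  obtain ⟨c, hc, hlow⟩ := hR.exists_eventually_mul_norm_le q
  have hcont : Tendsto (fun η : ℝ => L * (1 + η) + η / c) (𝓝 0) (𝓝 L) := by
    simpa using (by fun_prop : Continuous fun η : ℝ => L * (1 + η) + η / c).tendsto 0
  obtain ⟨η, hηa, hη⟩ :=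
    ((hcont.eventually (gt_mem_nhds ha)).filter_mono nhdsWithin_le_nhds |>.and
      (self_mem_nhdsWithin (s := Ioi 0))).exists
  have hgrad : ∀ᶠ x in 𝓝 q, ‖DqE t x - DqE t q‖ ≤ η :=
    ((hE.contDqE.comp (continuous_const.prodMk continuous_id)).continuousAt.tendsto.sub_const
      (DqE t q)).norm.eventually_le_const (by simpa using hη)
  obtain ⟨ρ, hρ, hball⟩ := Metric.nhds_basis_closedBall.eventually_iff.1
    (hlow.and ((hR.eventually_le_mul q (lt_add_of_pos_right 1 hη)).and hgrad))
  have hkey : ∀ p, finslerDist R1 q p < c * ρ → E t q - E t p ≤ a * finslerDist R1 q p := by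
    intro p hp
    have ha0 : 0 < a := hL.trans_lt ha
    refine le_of_forall_pos_lt_add fun ε hε => ?_
    obtain ⟨y, y', h, h0, h1, hlen⟩ :=
      exists_isACOn_integral_lt (lt_min hp (lt_add_of_pos_right _ (div_pos hε ha0)))
    have hmaps := h.mapsTo_closedBall hR h0 hc.le (fun x hx => (hball hx).1)
      (hlen.trans_le (min_le_left _ _))
    have henergy := hE.sub_le_mul_integral hR t h h0 hc hL hmaps (fun x hx => (hball hx).2.2)
      (fun x hx => (hball hx).1) (fun x hx => (hball hx).2.1) (inner_le_localSlope_mul hR t q)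
    rw [h1] at henergy
    calc E t q - E t p ≤ (L * (1 + η) + η / c) * ∫ s in (0 : ℝ)..1, R1 (y s) (y' s) := henergy
      _ ≤ a * ∫ s in (0 : ℝ)..1, R1 (y s) (y' s) :=
        mul_le_mul_of_nonneg_right hηa.le
          (intervalIntegral.integral_nonneg zero_le_one fun _ _ => hR.nonneg _ _)
      _ < a * (finslerDist R1 q p + ε / a) :=
        mul_lt_mul_of_pos_left (hlen.trans_le (min_le_right _ _)) ha0
      _ = a * finslerDist R1 q p + ε := by field_simp
  refine (hasBasis_puncturedNhdsWith _ q).eventually_iff.2 ⟨c * ρ, by positivity, fun p hp => ?_⟩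
  exact div_le_of_le_mul₀ (finslerDist_nonneg hR q p) (hL.trans ha.le)
    (max_le (hkey p hp.1) (mul_nonneg (hL.trans ha.le) (finslerDist_nonneg hR q p)))

theorem frequently_lt_slope_of_lt_localSlope (hR : IsFinsler R1) (hE : IsC1Energy E Et DqE)
    {t a : ℝ} {q : V} (ha : a < localSlope R1 DqE t q) :
    ∃ᶠ p in puncturedNhdsWith (finslerDist R1) q,
      a < max (E t q - E t p) 0 / finslerDist R1 q p := by
  obtain ⟨v, hv, hav⟩ := exists_lt_inner_div_of_lt_localSlope ha
  rw [lt_div_iff₀ (hR.pos q hv)] at hav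
  obtain ⟨m, hm, ham : a * m < ⟪DqE t q, v⟫⟩ :=
    ((continuous_const.mul continuous_id).continuousAt.eventually_lt continuousAt_const
      hav).exists_gt
  have hm0 : 0 < m := (hR.nonneg q v).trans_lt hm
  have hdist := eventually_finslerDist_add_smul_le hR q (-v) (m := m) (by rwa [hR.map_neg])
  have hdecrease : ∀ᶠ h in 𝓝[>] (0 : ℝ), h⁻¹ * (E t (q + h • -v) - E t q) < -(a * m) :=
    (hE.tendsto_slope_add_smul t q (-v)).eventually_lt_const (by rw [inner_neg_right]; linarith)
  refine (hasBasis_puncturedNhdsWith _ q).frequently_iff.2 fun ε hε => ?_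
  have hsmall : ∀ᶠ h in 𝓝[>] (0 : ℝ), h * m < ε :=
    nhdsWithin_le_nhds (((continuous_id.mul continuous_const).tendsto' 0 0 (by simp)).eventually
      (gt_mem_nhds hε))
  obtain ⟨h, ⟨⟨hd, hdec⟩, hhm⟩, hh0 : 0 < h⟩ :=
    (((hdist.and hdecrease).and hsmall).and self_mem_nhdsWithin).exists
  have hpq : q + h • -v ≠ q := by simp [hh0.ne', hv]
  have hpos := finslerDist_pos hR hpq
  rw [inv_mul_lt_iff₀ hh0] at hdec
  refine ⟨q + h • -v, ⟨hd.trans_lt hhm, hpq⟩, (lt_div_iff₀ hpos).2 ?_⟩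
  rcases lt_or_ge a 0 with ha0 | ha0
  · exact (mul_neg_of_neg_of_pos ha0 hpos).trans_le (le_max_right _ _)
  · exact ((mul_le_mul_of_nonneg_left hd ha0).trans_lt (by linarith)).trans_le (le_max_left _ _)

end MetricSlope

variable {d : ℕ}

theorem statement1_general
    (R1 : EuclideanSpace ℝ (Fin d) → EuclideanSpace ℝ (Fin d) → ℝ)
    (hR : IsFinsler R1)
    (E Et : ℝ → EuclideanSpace ℝ (Fin d) → ℝ)
    (DqE : ℝ → EuclideanSpace ℝ (Fin d) → EuclideanSpace ℝ (Fin d))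
    (hE : IsC1Energy E Et DqE)
    (t : ℝ) (q : EuclideanSpace ℝ (Fin d)) :
    localSlope R1 DqE t q =
      Filter.limsup (fun p => max (E t q - E t p) 0 / finslerDist R1 q p)
        (⨅ ε ∈ Set.Ioi (0:ℝ),
          Filter.principal {p | finslerDist R1 q p < ε ∧ p ≠ q}) := by
  change _ = limsup _ (puncturedNhdsWith (finslerDist R1) q)
  rcases subsingleton_or_nontrivial (EuclideanSpace ℝ (Fin d)) with hV | hV
  · -- `d = 0`: both sides are junk values, `sSup ∅ = 0` and `sInf univ = 0`.
    have hbot : puncturedNhdsWith (finslerDist R1) q = ⊥ :=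
      (hasBasis_puncturedNhdsWith _ q).eq_bot_iff.2
        ⟨1, one_pos, eq_empty_of_forall_notMem fun p hp => hp.2 (Subsingleton.elim p q)⟩
    simp [localSlope_of_subsingleton, hbot, limsup_eq]
  · exact (limsup_eq_of_forall_eventually_le_of_forall_frequently_lt
      (fun _ ha => eventually_slope_le_of_localSlope_lt hR hE ha)
      fun _ ha => frequently_lt_slope_of_lt_localSlope hR hE ha).symm

theorem statement1 (T : ℝ) (hT : 0 < T)
    (R1 : EuclideanSpace ℝ (Fin d) → EuclideanSpace ℝ (Fin d) → ℝ)
    (hR : IsFinsler R1) (hcomp : IsCompleteD (finslerDist R1))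
    (E Et : ℝ → EuclideanSpace ℝ (Fin d) → ℝ)
    (DqE : ℝ → EuclideanSpace ℝ (Fin d) → EuclideanSpace ℝ (Fin d))
    (hE : IsC1Energy E Et DqE)
    (t : ℝ) (ht : t ∈ Set.Icc 0 T) (q : EuclideanSpace ℝ (Fin d)) :
    localSlope R1 DqE t q =
      Filter.limsup (fun p => max (E t q - E t p) 0 / finslerDist R1 q p)
        (⨅ ε ∈ Set.Ioi (0:ℝ),
          Filter.principal {p | finslerDist R1 q p < ε ∧ p ≠ q}) :=
  statement1_general R1 hR E Et DqE hE t q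
end

section
/- For ε > 0 define M_ε : [0,∞)³ → [0,∞] by M_ε(α,ν,ξ) = ν + (ε/(2α)) ν² + (α/(2ε)) ((ξ−1)⁺)² for α > 0, M_ε(0,0,ξ) = 0, and M_ε(0,ν,ξ) = +∞ for ν > 0. Define M₀ : [0,∞)³ → [0,∞] by M₀(0,ν,ξ) = ν + ν(ξ−1)⁺, and for α > 0: M₀(α,ν,ξ) = ν if ξ ≤ 1 and M₀(α,ν,ξ) = +∞ if ξ > 1. Then for every sequence ε_k ↓ 0 and every sequence (α_k,ν_k,ξ_k) → (α,ν,ξ) in [0,∞)³ one has M₀(α,ν,ξ) ≤ liminf_{k→∞} M_{ε_k}(α_k,ν_k,ξ_k). -/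
open MeasureTheory Filter Set Function
open scoped Topology ENNReal RealInnerProductSpace

/-!
By Young's inequality `ν (ξ-1)⁺ ≤ ε/(2α) ν² + α/(2ε) ((ξ-1)⁺)²`, so `M_ε(α,ν,ξ) ≥ ν + ν (ξ-1)⁺`
pointwise (also for `α = 0`), and this lower bound is continuous in `(ν,ξ)`. It dominates
`M₀` except when `α > 0` and `ξ > 1`; there the penalty `α_k/(2ε_k) ((ξ_k-1)⁺)²` alone tends
to `+∞`, because its numerator tends to `α ((ξ-1)⁺)² / 2 > 0` while `ε_k → 0⁺`.
-/

theorem le_liminf_of_tendsto_of_eventuallyLE {α β : Type*} [CompleteLinearOrder α]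
    [TopologicalSpace α] [OrderTopology α] {l : Filter β} [l.NeBot] {f g : β → α} {b : α}
    (hf : Tendsto f l (𝓝 b)) (hfg : f ≤ᶠ[l] g) : b ≤ liminf g l :=
  hf.liminf_eq ▸ liminf_le_liminf hfg

theorem mul_le_young {ε a v w : ℝ} (hε : 0 < ε) (ha : 0 < a) :
    v * w ≤ ε / (2 * a) * v ^ 2 + a / (2 * ε) * w ^ 2 := by
  have hsq : ε / (2 * a) * v ^ 2 + a / (2 * ε) * w ^ 2 - v * w
      = (ε * v - a * w) ^ 2 / (2 * a * ε) := by
    field_simp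
    ring
  have : 0 ≤ (ε * v - a * w) ^ 2 / (2 * a * ε) := by positivity
  linarith

theorem ofReal_add_mul_posPart_le_MepsE {ε a v x : ℝ} (hε : 0 < ε) (ha : 0 ≤ a) :
    ENNReal.ofReal (v + v * max (x - 1) 0) ≤ MepsE ε a v x := by
  rcases ha.eq_or_lt with rfl | ha
  · by_cases hv0 : v = 0 <;> simp [MepsE, hv0]
  · rw [MepsE, if_neg ha.ne']
    apply ENNReal.ofReal_le_ofReal
    linarith [mul_le_young (v := v) (w := max (x - 1) 0) hε ha]

theorem ofReal_le_MepsE {ε a v x : ℝ} (hε : 0 < ε) (ha : 0 ≤ a) (hv : 0 ≤ v) :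
    ENNReal.ofReal v ≤ MepsE ε a v x :=
  (ENNReal.ofReal_le_ofReal (le_add_of_nonneg_right (mul_nonneg hv (le_max_right _ _)))).trans
    (ofReal_add_mul_posPart_le_MepsE hε ha)

theorem ofReal_penalty_le_MepsE {ε a v x : ℝ} (hε : 0 < ε) (ha : 0 < a) (hv : 0 ≤ v) :
    ENNReal.ofReal (a / (2 * ε) * max (x - 1) 0 ^ 2) ≤ MepsE ε a v x := by
  rw [MepsE, if_neg ha.ne']
  apply ENNReal.ofReal_le_ofReal
  have : 0 ≤ ε / (2 * a) * v ^ 2 := by positivity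
  linarith

theorem tendsto_penalty_atTop {ι : Type*} {l : Filter ι} {ε a x : ι → ℝ} {α ξ : ℝ}
    (hε : ∀ k, 0 < ε k) (hε0 : Tendsto ε l (𝓝 0)) (hα : 0 < α) (hξ : 1 < ξ)
    (ha : Tendsto a l (𝓝 α)) (hx : Tendsto x l (𝓝 ξ)) :
    Tendsto (fun k => a k / (2 * ε k) * max (x k - 1) 0 ^ 2) l atTop := by
  have hnum : Tendsto (fun k => a k * max (x k - 1) 0 ^ 2 / 2) l
      (𝓝 (α * max (ξ - 1) 0 ^ 2 / 2)) :=
    (ha.mul (((hx.sub_const 1).max tendsto_const_nhds).pow 2)).div_const 2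
  have hinv : Tendsto (fun k => (ε k)⁻¹) l atTop :=
    (tendsto_nhdsWithin_iff.mpr ⟨hε0, .of_forall hε⟩).inv_tendsto_nhdsGT_zero
  have hpos : 0 < α * max (ξ - 1) 0 ^ 2 / 2 := by
    have : 0 < max (ξ - 1) 0 := lt_max_of_lt_left (by linarith)
    positivity
  refine (hnum.pos_mul_atTop hpos hinv).congr fun k => ?_
  field_simp

theorem statement2_general (eps : ℕ → ℝ) (heps : ∀ k, 0 < eps k)
    (heps0 : Filter.Tendsto eps Filter.atTop (𝓝 0))
    (a v x : ℕ → ℝ) (α ν ξ : ℝ)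
    (ha : ∀ k, 0 ≤ a k) (hv : ∀ k, 0 ≤ v k)
    (hα : 0 ≤ α)
    (hca : Filter.Tendsto a Filter.atTop (𝓝 α))
    (hcv : Filter.Tendsto v Filter.atTop (𝓝 ν))
    (hcx : Filter.Tendsto x Filter.atTop (𝓝 ξ)) :
    M0E α ν ξ ≤ Filter.liminf (fun k => MepsE (eps k) (a k) (v k) (x k)) Filter.atTop := by
  by_cases hα0 : α = 0
  · have hexcess : Tendsto (fun k => max (x k - 1) 0) atTop (𝓝 (max (ξ - 1) 0)) :=
      (hcx.sub_const 1).max tendsto_const_nhds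
    simpa [M0E, hα0] using le_liminf_of_tendsto_of_eventuallyLE
      (ENNReal.tendsto_ofReal (hcv.add (hcv.mul hexcess)))
      (.of_forall fun k => ofReal_add_mul_posPart_le_MepsE (heps k) (ha k))
  have hαpos : 0 < α := hα.lt_of_ne' hα0
  by_cases hξ1 : ξ ≤ 1
  · simpa [M0E, hα0, hξ1] using le_liminf_of_tendsto_of_eventuallyLE (ENNReal.tendsto_ofReal hcv)
      (.of_forall fun k => ofReal_le_MepsE (heps k) (ha k) (hv k))
  · have hpen := ENNReal.tendsto_ofReal_atTop.comp
      (tendsto_penalty_atTop heps heps0 hαpos (not_le.mp hξ1) hca hcx)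
    rw [M0E, if_neg hα0, if_neg hξ1]
    refine le_liminf_of_tendsto_of_eventuallyLE hpen ?_
    filter_upwards [hca.eventually (eventually_gt_nhds hαpos)] with k hak
    exact ofReal_penalty_le_MepsE (heps k) hak (hv k)

theorem statement2 (eps : ℕ → ℝ) (heps : ∀ k, 0 < eps k) (hanti : StrictAnti eps)
    (heps0 : Filter.Tendsto eps Filter.atTop (𝓝 0))
    (a v x : ℕ → ℝ) (α ν ξ : ℝ)
    (ha : ∀ k, 0 ≤ a k) (hv : ∀ k, 0 ≤ v k) (hx : ∀ k, 0 ≤ x k)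
    (hα : 0 ≤ α) (hν : 0 ≤ ν) (hξ : 0 ≤ ξ)
    (hca : Filter.Tendsto a Filter.atTop (𝓝 α))
    (hcv : Filter.Tendsto v Filter.atTop (𝓝 ν))
    (hcx : Filter.Tendsto x Filter.atTop (𝓝 ξ)) :
    M0E α ν ξ ≤ Filter.liminf (fun k => MepsE (eps k) (a k) (v k) (x k)) Filter.atTop :=
  statement2_general eps heps heps0 a v x α ν ξ ha hv hα hca hcv hcx
end

section
/- For ε > 0 define M_ε : [0,∞)³ → [0,∞] by M_ε(α,ν,ξ) = ν + (ε/(2α)) ν² + (α/(2ε)) ((ξ−1)⁺)² for α > 0, M_ε(0,0,ξ) = 0, and M_ε(0,ν,ξ) = +∞ for ν > 0. Define M₀ : [0,∞)³ → [0,∞] by M₀(0,ν,ξ) = ν + ν(ξ−1)⁺, and for α > 0: M₀(α,ν,ξ) = ν if ξ ≤ 1 and M₀(α,ν,ξ) = +∞ if ξ > 1. Then for every (α,ν,ξ) ∈ [0,∞)³ and every sequence ε_k ↓ 0 there exists a sequence (α_k,ν_k,ξ_k) → (α,ν,ξ) in [0,∞)³ such that limsup_{k→∞} M_{ε_k}(α_k,ν_k,ξ_k)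 ≤ M₀(α,ν,ξ). -/
open MeasureTheory Filter Set Function
open scoped Topology ENNReal RealInnerProductSpace

/-! A single recovery sequence works: keep `ν` and `ξ` fixed and take
`α_k = α + ε_k ν / ((ξ-1)⁺ + √ε_k)`. When `α = 0` and `ξ > 1` this balances the two viscous terms
of `M_ε`, each tending to `ν (ξ-1)⁺ / 2`; when `ξ ≤ 1` the extra `ν √ε_k` in `α_k` makes the
term `ε ν² / (2 α_k)` at most `ν √ε_k / 2`. In the remaining case `α > 0`, `ξ > 1` the bound
`M₀ = ∞` is trivial. -/

noncomputable def recoveryRate (α ν ξ ε : ℝ) : ℝ :=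
  α + ε * ν / (max (ξ - 1) 0 + √ε)

lemma recoveryRate_nonneg {α ν ξ ε : ℝ} (hα : 0 ≤ α) (hν : 0 ≤ ν) (hε : 0 ≤ ε) :
    0 ≤ recoveryRate α ν ξ ε := by
  unfold recoveryRate
  positivity

lemma tendsto_recoveryRate (α ν ξ : ℝ) {eps : ℕ → ℝ} (heps : ∀ k, 0 < eps k)
    (heps0 : Tendsto eps atTop (𝓝 0)) :
    Tendsto (fun k => recoveryRate α ν ξ (eps k)) atTop (𝓝 α) := by
  have hq : Tendsto (fun k => eps k / (max (ξ - 1) 0 + √(eps k))) atTop (𝓝 0) := by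
    refine squeeze_zero (fun k => ?_) (fun k => ?_) (by simpa using heps0.sqrt)
    · exact div_nonneg (heps k).le (add_nonneg (le_max_right _ _) (Real.sqrt_nonneg _))
    have hs := Real.sqrt_pos.2 (heps k)
    calc eps k / (max (ξ - 1) 0 + √(eps k)) ≤ eps k / √(eps k) :=
          div_le_div_of_nonneg_left (heps k).le hs (le_add_of_nonneg_left (le_max_right _ _))
      _ = √(eps k) := Real.div_sqrt
  simpa [recoveryRate, mul_div_right_comm] using (hq.mul_const ν).const_add α

/-- The viscous part of `M_ε` at the recovery rate, with `ε = s²` and `m = (ξ-1)⁺`. -/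
lemma viscous_terms_le {α ν m s : ℝ} (hα : 0 ≤ α) (hν : 0 < ν) (hm : 0 ≤ m) (hs : 0 < s)
    (h : α = 0 ∨ m = 0) :
    s ^ 2 / (2 * (α + s ^ 2 * ν / (m + s))) * ν ^ 2
        + (α + s ^ 2 * ν / (m + s)) / (2 * s ^ 2) * m ^ 2 ≤ ν * m + ν * s / 2 := by
  rcases h with rfl | rfl
  · have hms : 0 < m + s := by positivity
    have hterm : m ^ 2 / (m + s) ≤ m := by
      rw [div_le_iff₀ hms]; nlinarith
    rw [zero_add]
    calc s ^ 2 / (2 * (s ^ 2 * ν / (m + s))) * ν ^ 2 + s ^ 2 * ν / (m + s) / (2 * s ^ 2) * m ^ 2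
        = ν * (m + s) / 2 + ν / 2 * (m ^ 2 / (m + s)) := by
          field_simp
      _ ≤ ν * (m + s) / 2 + ν / 2 * m := by gcongr
      _ = ν * m + ν * s / 2 := by ring
  · rw [zero_add, show s ^ 2 * ν / s = s * ν by field_simp]
    have hterm : s ^ 2 / (2 * (α + s * ν)) * ν ^ 2 ≤ ν * s / 2 := by
      rw [div_mul_eq_mul_div, div_le_iff₀ (by positivity)]
      nlinarith [mul_nonneg (mul_nonneg hν.le hs.le) hα]
    simpa using hterm

lemma MepsE_recoveryRate_le {α ν ξ ε : ℝ} (hα : 0 ≤ α) (hν : 0 ≤ ν) (hε : 0 < ε)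
    (h : α = 0 ∨ ξ ≤ 1) :
    MepsE ε (recoveryRate α ν ξ ε) ν ξ
      ≤ ENNReal.ofReal (ν + ν * max (ξ - 1) 0 + ν * √ε / 2) := by
  rcases hν.eq_or_lt with rfl | hν
  · rcases h with rfl | hξ
    · simp [MepsE, recoveryRate]
    · simp [MepsE, recoveryRate, max_eq_right (sub_nonpos.2 hξ)]
  have hs := Real.sqrt_pos.2 hε
  have ha : recoveryRate α ν ξ ε ≠ 0 := by
    unfold recoveryRate; positivity
  have key := viscous_terms_le hα hν (le_max_right (ξ - 1) 0) hs
    (h.imp_right fun hξ => max_eq_right (by linarith))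
  rw [Real.sq_sqrt hε.le] at key
  rw [MepsE, if_neg ha, recoveryRate]
  exact ENNReal.ofReal_le_ofReal (by linarith)

lemma M0E_eq_of_eq_zero_or_le_one {α ν ξ : ℝ} (h : α = 0 ∨ ξ ≤ 1) :
    M0E α ν ξ = ENNReal.ofReal (ν + ν * max (ξ - 1) 0) := by
  by_cases hα : α = 0
  · simp [M0E, hα]
  · have hξ : ξ ≤ 1 := h.resolve_left hα
    simp [M0E, hα, hξ]

theorem statement3_general (α ν ξ : ℝ) (hα : 0 ≤ α) (hν : 0 ≤ ν) (hξ : 0 ≤ ξ)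
    (eps : ℕ → ℝ) (heps : ∀ k, 0 < eps k)
    (heps0 : Filter.Tendsto eps Filter.atTop (𝓝 0)) :
    ∃ a v x : ℕ → ℝ,
      (∀ k, 0 ≤ a k ∧ 0 ≤ v k ∧ 0 ≤ x k) ∧
      Filter.Tendsto a Filter.atTop (𝓝 α) ∧
      Filter.Tendsto v Filter.atTop (𝓝 ν) ∧
      Filter.Tendsto x Filter.atTop (𝓝 ξ) ∧
      Filter.limsup (fun k => MepsE (eps k) (a k) (v k) (x k)) Filter.atTop
        ≤ M0E α ν ξ := by
  refine ⟨fun k => recoveryRate α ν ξ (eps k), fun _ => ν, fun _ => ξ,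
    fun k => ⟨recoveryRate_nonneg hα hν (heps k).le, hν, hξ⟩,
    tendsto_recoveryRate α ν ξ heps heps0, tendsto_const_nhds, tendsto_const_nhds, ?_⟩
  by_cases h : α = 0 ∨ ξ ≤ 1
  · have hbound : Tendsto (fun k => ENNReal.ofReal (ν + ν * max (ξ - 1) 0 + ν * √(eps k) / 2))
        atTop (𝓝 (M0E α ν ξ)) := by
      rw [M0E_eq_of_eq_zero_or_le_one h]
      refine ENNReal.tendsto_ofReal ?_
      simpa using ((heps0.sqrt.const_mul ν).div_const 2).const_add (ν + ν * max (ξ - 1) 0)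
    calc limsup (fun k => MepsE (eps k) (recoveryRate α ν ξ (eps k)) ν ξ) atTop
        ≤ limsup (fun k => ENNReal.ofReal (ν + ν * max (ξ - 1) 0 + ν * √(eps k) / 2)) atTop :=
          limsup_le_limsup (Eventually.of_forall fun k =>
            MepsE_recoveryRate_le hα hν (heps k) h)
      _ = M0E α ν ξ := hbound.limsup_eq
  · push Not at h
    simp [M0E, h.1, not_le.2 h.2]

theorem statement3 (α ν ξ : ℝ) (hα : 0 ≤ α) (hν : 0 ≤ ν) (hξ : 0 ≤ ξ)
    (eps : ℕ → ℝ) (heps : ∀ k, 0 < eps k) (hanti : StrictAnti eps)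
    (heps0 : Filter.Tendsto eps Filter.atTop (𝓝 0)) :
    ∃ a v x : ℕ → ℝ,
      (∀ k, 0 ≤ a k ∧ 0 ≤ v k ∧ 0 ≤ x k) ∧
      Filter.Tendsto a Filter.atTop (𝓝 α) ∧
      Filter.Tendsto v Filter.atTop (𝓝 ν) ∧
      Filter.Tendsto x Filter.atTop (𝓝 ξ) ∧
      Filter.limsup (fun k => MepsE (eps k) (a k) (v k) (x k)) Filter.atTop
        ≤ M0E α ν ξ :=
  statement3_general α ν ξ hα hν hξ eps heps heps0
end

section
/- For ε > 0 define M_ε : [0,∞)³ → [0,∞] by M_ε(α,ν,ξ) = ν + (ε/(2α)) ν² + (α/(2ε)) ((ξ−1)⁺)² for α > 0, M_ε(0,0,ξ) = 0, and M_ε(0,ν,ξ) = +∞ for ν > 0. Define M₀ : [0,∞)³ → [0,∞] by M₀(0,ν,ξ) = ν + ν(ξ−1)⁺, and for α > 0: M₀(α,ν,ξ) = ν if ξ ≤ 1 and M₀(α,ν,ξ) = +∞ if ξ > 1. Let s₀ < s₁, let ε_k ↓ 0, and let α_k, ν_k, ξ_k, α̂, ν̂, ξ̂ : (s₀,s₁)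 → [0,∞) be measurable with (α_k, ν_k) ⇀ (α̂, ν̂) weakly in L¹((s₀,s₁); ℝ²) and liminf_{k→∞} ξ_k(s) ≥ ξ̂(s) for a.e. s ∈ (s₀,s₁). Then ∫_{s₀}^{s₁} M₀(α̂(s), ν̂(s), ξ̂(s)) ds ≤ liminf_{k→∞} ∫_{s₀}^{s₁} M_{ε_k}(α_k(s), ν_k(s), ξ_k(s)) ds. -/
open MeasureTheory Filter Set Function
open scoped Topology ENNReal RealInnerProductSpace

/-!
Split according to whether `α̂` charges the set `{ξ̂ > 1}`. If it does not, then
`M₀(α̂, ν̂, ξ̂) = ν̂ max(ξ̂, 1)` a.e., while Young's inequality gives `M_ε(α, ν, ξ) ≥ ν max(ξ, 1)`.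
If it does, then `M_ε(α, ν, ξ) ≥ α ((ξ-1)⁺)² / (2ε)`, whose second factor tends to `+∞` on
`{ξ̂ > 1}` as `ε_k ↓ 0`, so the energies blow up. Both cases rest on one semicontinuity fact:
`∫ g W ≤ liminf ∫ f_k w_k` when `0 ≤ f_k ⇀ g` weakly in `L¹` and `W ≤ liminf w_k` pointwise.
It is proved by testing the weak convergence against the bounded functions `ψ 1_{B_N}`, where
`ψ` truncates `W` and `B_N = {ψ ≤ w_k for all k ≥ N}`, and applying Fatou's lemma twice.
-/

section WeakLowerSemicontinuity

variable {α : Type*} [MeasurableSpace α] {μ : Measure α}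

def TendstoWeakL1 (μ : Measure α) (f : ℕ → α → ℝ) (g : α → ℝ) : Prop :=
  ∀ φ : α → ℝ, Measurable φ → (∃ C, ∀ s, |φ s| ≤ C) →
    Tendsto (fun k => ∫ s, f k s * φ s ∂μ) atTop (𝓝 (∫ s, g s * φ s ∂μ))

theorem lintegral_le_of_ae_tendsto {F : α → ℝ≥0∞} {G : ℕ → α → ℝ≥0∞} {L : ℝ≥0∞}
    (hG : ∀ n, AEMeasurable (G n) μ)
    (hGF : ∀ᵐ s ∂μ, Tendsto (fun n => G n s) atTop (𝓝 (F s)))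
    (hL : ∀ n, ∫⁻ s, G n s ∂μ ≤ L) : ∫⁻ s, F s ∂μ ≤ L :=
  calc ∫⁻ s, F s ∂μ = ∫⁻ s, liminf (fun n => G n s) atTop ∂μ :=
        lintegral_congr_ae (hGF.mono fun _ hs => hs.liminf_eq.symm)
    _ ≤ liminf (fun n => ∫⁻ s, G n s ∂μ) atTop := lintegral_liminf_le' hG
    _ ≤ L := liminf_le_of_frequently_le' (Frequently.of_forall hL)

section

variable {f : ℕ → α → ℝ} {g : α → ℝ}

theorem TendstoWeakL1.tendsto_lintegral_ofReal_mul (h : TendstoWeakL1 μ f g)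
    (hf : ∀ k, Integrable (f k) μ) (hg : Integrable g μ) (hf0 : ∀ k, 0 ≤ᵐ[μ] f k)
    (hg0 : 0 ≤ᵐ[μ] g) {φ : α → ℝ} {C : ℝ} (hφ : Measurable φ) (hφ0 : 0 ≤ φ)
    (hφC : ∀ s, φ s ≤ C) :
    Tendsto (fun k => ∫⁻ s, ENNReal.ofReal (f k s * φ s) ∂μ) atTop
      (𝓝 (∫⁻ s, ENNReal.ofReal (g s * φ s) ∂μ)) := by
  have hφabs : ∀ s, |φ s| ≤ C := fun s => (abs_of_nonneg (hφ0 s)).trans_le (hφC s)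
  have hofReal : ∀ u : α → ℝ, Integrable u μ → 0 ≤ᵐ[μ] u →
      ENNReal.ofReal (∫ s, u s * φ s ∂μ) = ∫⁻ s, ENNReal.ofReal (u s * φ s) ∂μ :=
    fun u hu hu0 => ofReal_integral_eq_lintegral_ofReal
      (hu.mul_bdd hφ.aestronglyMeasurable (Eventually.of_forall fun s => hφabs s))
      (hu0.mono fun s hs => mul_nonneg hs (hφ0 s))
  simp only [← hofReal _ (hf _) (hf0 _), ← hofReal g hg hg0]
  exact (ENNReal.continuous_ofReal.tendsto _).comp (h φ hφ ⟨C, hφabs⟩)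

theorem TendstoWeakL1.lintegral_ofReal_mul_le_liminf_of_bdd (h : TendstoWeakL1 μ f g)
    (hf : ∀ k, Integrable (f k) μ) (hg : Integrable g μ) (hf0 : ∀ k, 0 ≤ᵐ[μ] f k)
    (hg0 : 0 ≤ᵐ[μ] g) {w : ℕ → α → ℝ} (hw : ∀ k, Measurable (w k)) {ψ : α → ℝ} {C : ℝ}
    (hψ : Measurable ψ) (hψ0 : 0 ≤ ψ) (hψC : ∀ s, ψ s ≤ C)
    (hψw : ∀ᵐ s ∂μ, ψ s = 0 ∨ ∀ᶠ k in atTop, ψ s ≤ w k s) :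
    ∫⁻ s, ENNReal.ofReal (g s * ψ s) ∂μ
      ≤ liminf (fun k => ∫⁻ s, ENNReal.ofReal (f k s * w k s) ∂μ) atTop := by
  set B : ℕ → Set α := fun N => ⋂ k ≥ N, {s | ψ s ≤ w k s}
  have hB : ∀ N, MeasurableSet (B N) := fun N =>
    MeasurableSet.iInter fun k => MeasurableSet.iInter fun _ => measurableSet_le hψ (hw k)
  refine lintegral_le_of_ae_tendsto
    (G := fun N s => ENNReal.ofReal (g s * (B N).indicator ψ s))
    (fun N => (hg.1.aemeasurable.mul (hψ.indicator (hB N)).aemeasurable).ennreal_ofReal)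
    ?_ fun N => ?_
  · filter_upwards [hψw] with s hs
    refine tendsto_const_nhds.congr' ?_
    rcases hs with hs | hs
    · exact Eventually.of_forall fun N => by by_cases hN : s ∈ B N <;> simp [hN, hs]
    · obtain ⟨N₀, hN₀⟩ := eventually_atTop.1 hs
      filter_upwards [eventually_ge_atTop N₀] with N hN
      rw [indicator_of_mem (mem_iInter₂.2 fun k hk => hN₀ k (hN.trans hk))]
  · rw [← (h.tendsto_lintegral_ofReal_mul hf hg hf0 hg0 (hψ.indicator (hB N))
      (indicator_nonneg fun s _ => hψ0 s) (C := C) fun s => ?_).liminf_eq]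
    · refine liminf_le_liminf (eventually_atTop.2 ⟨N, fun k hk => lintegral_mono_ae ?_⟩)
      filter_upwards [hf0 k] with s hs
      by_cases hsB : s ∈ B N
      · rw [indicator_of_mem hsB]
        exact ENNReal.ofReal_le_ofReal
          (mul_le_mul_of_nonneg_left (mem_iInter₂.1 hsB k hk) hs)
      · simp [indicator_of_notMem hsB]
    · by_cases hsB : s ∈ B N
      · simpa [indicator_of_mem hsB] using hψC s
      · simpa [indicator_of_notMem hsB] using (hψ0 s).trans (hψC s)

theorem TendstoWeakL1.lintegral_ofReal_mul_le_liminf (h : TendstoWeakL1 μ f g)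
    (hf : ∀ k, Integrable (f k) μ) (hg : Integrable g μ) (hf0 : ∀ k, 0 ≤ᵐ[μ] f k)
    (hg0 : 0 ≤ᵐ[μ] g) {w : ℕ → α → ℝ} (hw : ∀ k, Measurable (w k)) {W : α → ℝ} (hW : Measurable W)
    (hwW : ∀ᵐ s ∂μ, ∀ c < W s, ∀ᶠ k in atTop, c < w k s) :
    ∫⁻ s, ENNReal.ofReal (g s * W s) ∂μ
      ≤ liminf (fun k => ∫⁻ s, ENNReal.ofReal (f k s * w k s) ∂μ) atTop := by
  -- `ψ m` is bounded, and lies strictly below `W` wherever it is positive.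
  set ψ : ℕ → α → ℝ := fun m s => max (min (W s) m - 1 / (m + 1)) 0
  have hψ_lim : ∀ s, Tendsto (fun m => ψ m s) atTop (𝓝 (max (W s) 0)) := fun s => by
    have hmin : Tendsto (fun m : ℕ => min (W s) m) atTop (𝓝 (W s)) :=
      tendsto_const_nhds.congr' <| (tendsto_natCast_atTop_atTop.eventually_ge_atTop (W s)).mono
        fun m hm => (min_eq_left hm).symm
    simpa only [sub_zero] using
      (hmin.sub tendsto_one_div_add_atTop_nhds_zero_nat).max (tendsto_const_nhds (x := (0 : ℝ)))
  calc ∫⁻ s, ENNReal.ofReal (g s * W s) ∂μ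
      ≤ ∫⁻ s, ENNReal.ofReal (g s * max (W s) 0) ∂μ := lintegral_mono_ae <| hg0.mono fun s hs =>
        ENNReal.ofReal_le_ofReal (mul_le_mul_of_nonneg_left (le_max_left _ _) hs)
    _ ≤ _ := by
      refine lintegral_le_of_ae_tendsto (G := fun m s => ENNReal.ofReal (g s * ψ m s))
        (fun m => (hg.1.aemeasurable.mul (by fun_prop)).ennreal_ofReal)
        (Eventually.of_forall fun s => (ENNReal.continuous_ofReal.tendsto _).comp
          (tendsto_const_nhds.mul (hψ_lim s))) fun m => ?_
      refine h.lintegral_ofReal_mul_le_liminf_of_bdd hf hg hf0 hg0 hw (C := m) (by fun_prop)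
        (fun s => le_max_right _ _) (fun s => max_le ?_ m.cast_nonneg) ?_
      · linarith [min_le_right (W s) m, show (0 : ℝ) ≤ 1 / (m + 1) by positivity]
      · filter_upwards [hwW] with s hs
        rcases le_or_gt (min (W s) m - 1 / (m + 1)) 0 with hneg | hpos
        · exact Or.inl (max_eq_right hneg)
        · refine Or.inr ((hs _ ?_).mono fun k hk => hk.le)
          change max _ 0 < W s
          rw [max_eq_left hpos.le]
          linarith [min_le_left (W s) m, show (0 : ℝ) < 1 / (m + 1) by positivity]

end

end WeakLowerSemicontinuity

theorem eventually_lt_of_coe_le_liminf {u : ℕ → ℝ} {y c : ℝ}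
    (h : (y : EReal) ≤ liminf (fun k => (u k : EReal)) atTop) (hc : c < y) :
    ∀ᶠ k in atTop, c < u k :=
  (eventually_lt_of_lt_liminf ((EReal.coe_lt_coe_iff.2 hc).trans_le h)).mono
    fun _ hk => EReal.coe_lt_coe_iff.1 hk

theorem max_one_eq_one_add_max_sub_one (x : ℝ) : max x 1 = 1 + max (x - 1) 0 := by
  rw [← max_add_add_left]; norm_num

theorem M0E_eq_ofReal_mul_max_one {a v x : ℝ} (h : a ≠ 0 → x ≤ 1) :
    M0E a v x = ENNReal.ofReal (v * max x 1) := by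
  unfold M0E
  split_ifs with ha hx
  · rw [max_one_eq_one_add_max_sub_one, mul_add, mul_one]
  · rw [max_eq_right hx, mul_one]
  · exact absurd (h ha) hx

theorem ofReal_mul_max_one_le_MepsE {ε a v x : ℝ} (hε : 0 < ε) (ha : 0 ≤ a) :
    ENNReal.ofReal (v * max x 1) ≤ MepsE ε a v x := by
  unfold MepsE
  rcases ha.eq_or_lt with rfl | ha
  · rw [if_pos rfl]
    split_ifs with hv <;> simp [hv]
  rw [if_neg ha.ne', max_one_eq_one_add_max_sub_one]
  refine ENNReal.ofReal_le_ofReal ?_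
  set X := max (x - 1) 0
  have young : v * X ≤ ε / (2 * a) * v ^ 2 + a / (2 * ε) * X ^ 2 := by
    rw [div_mul_eq_mul_div, div_mul_eq_mul_div, div_add_div _ _ (by positivity) (by positivity),
      le_div_iff₀ (by positivity)]
    nlinarith [sq_nonneg (ε * v - a * X), mul_pos hε ha]
  linarith

theorem ofReal_mul_le_MepsE {ε a v x : ℝ} (hε : 0 < ε) (hv : 0 ≤ v) :
    ENNReal.ofReal (a * (max (x - 1) 0 ^ 2 / (2 * ε))) ≤ MepsE ε a v x := by
  rcases le_or_gt a 0 with ha | ha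
  · rw [ENNReal.ofReal_of_nonpos (mul_nonpos_of_nonpos_of_nonneg ha (by positivity))]
    exact bot_le
  unfold MepsE
  rw [if_neg ha.ne']
  refine ENNReal.ofReal_le_ofReal ?_
  have : 0 ≤ ε / (2 * a) * v ^ 2 := by positivity
  have : a * (max (x - 1) 0 ^ 2 / (2 * ε)) = a / (2 * ε) * max (x - 1) 0 ^ 2 := by ring
  linarith

theorem tendsto_max_sub_one_sq_div_atTop {ε x : ℕ → ℝ} {d : ℝ} (hε : ∀ k, 0 < ε k)
    (hε0 : Tendsto ε atTop (𝓝 0)) (hd : 0 < d) (hx : ∀ᶠ k in atTop, 1 + d < x k) :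
    Tendsto (fun k => max (x k - 1) 0 ^ 2 / (2 * ε k)) atTop atTop := by
  have hinv : Tendsto (fun k => (ε k)⁻¹) atTop atTop :=
    (tendsto_nhdsWithin_iff.2 ⟨hε0, Eventually.of_forall hε⟩).inv_tendsto_nhdsGT_zero
  refine tendsto_atTop_mono' _ ?_ (hinv.const_mul_atTop (by positivity : 0 < d ^ 2 / 2))
  filter_upwards [hx] with k hk
  have hdX : d ≤ max (x k - 1) 0 := le_max_of_le_left (by linarith)
  have hεk := hε k
  calc d ^ 2 / 2 * (ε k)⁻¹ = d ^ 2 / (2 * ε k) := by field_simp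
    _ ≤ max (x k - 1) 0 ^ 2 / (2 * ε k) := by gcongr

section Cases

variable {α : Type*} [MeasurableSpace α] {μ : Measure α} {eps : ℕ → ℝ} {a v x : ℕ → α → ℝ}
  {ah vh xh : α → ℝ}

theorem lintegral_M0E_le_liminf_of_ae_le_one (heps : ∀ k, 0 < eps k)
    (hv : TendstoWeakL1 μ v vh) (hvi : ∀ k, Integrable (v k) μ) (hvhi : Integrable vh μ)
    (hv0 : ∀ k, 0 ≤ᵐ[μ] v k) (hvh0 : 0 ≤ᵐ[μ] vh) (ha0 : ∀ k, 0 ≤ᵐ[μ] a k)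
    (hx : ∀ k, Measurable (x k)) (hxh : Measurable xh)
    (hlim : ∀ᵐ s ∂μ, (xh s : EReal) ≤ liminf (fun k => (x k s : EReal)) atTop)
    (hah : ∀ᵐ s ∂μ, ah s ≠ 0 → xh s ≤ 1) :
    ∫⁻ s, M0E (ah s) (vh s) (xh s) ∂μ
      ≤ liminf (fun k => ∫⁻ s, MepsE (eps k) (a k s) (v k s) (x k s) ∂μ) atTop :=
  calc ∫⁻ s, M0E (ah s) (vh s) (xh s) ∂μ = ∫⁻ s, ENNReal.ofReal (vh s * max (xh s) 1) ∂μ :=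
        lintegral_congr_ae (hah.mono fun s hs => M0E_eq_ofReal_mul_max_one hs)
    _ ≤ liminf (fun k => ∫⁻ s, ENNReal.ofReal (v k s * max (x k s) 1) ∂μ) atTop := by
        refine hv.lintegral_ofReal_mul_le_liminf hvi hvhi hv0 hvh0
          (fun k => (hx k).max measurable_const) (hxh.max measurable_const) ?_
        filter_upwards [hlim] with s hs c hc
        rcases lt_max_iff.1 hc with hc | hc
        · exact (eventually_lt_of_coe_le_liminf hs hc).mono fun k hk => lt_max_of_lt_left hk
        · exact Eventually.of_forall fun k => lt_max_of_lt_right hc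
    _ ≤ _ := liminf_le_liminf <| Eventually.of_forall fun k => lintegral_mono_ae <|
        (ha0 k).mono fun s hs => ofReal_mul_max_one_le_MepsE (heps k) hs

theorem liminf_lintegral_MepsE_eq_top (heps : ∀ k, 0 < eps k)
    (heps0 : Tendsto eps atTop (𝓝 0)) (ha : TendstoWeakL1 μ a ah)
    (hai : ∀ k, Integrable (a k) μ) (hahi : Integrable ah μ) (ha0 : ∀ k, 0 ≤ᵐ[μ] a k)
    (hah0 : 0 ≤ᵐ[μ] ah) (hv0 : ∀ k, 0 ≤ᵐ[μ] v k) (hx : ∀ k, Measurable (x k))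
    (hxh : Measurable xh)
    (hlim : ∀ᵐ s ∂μ, (xh s : EReal) ≤ liminf (fun k => (x k s : EReal)) atTop)
    (hpos : ∫⁻ s in {s | 1 < xh s}, ENNReal.ofReal (ah s) ∂μ ≠ 0) :
    liminf (fun k => ∫⁻ s, MepsE (eps k) (a k s) (v k s) (x k s) ∂μ) atTop = ⊤ := by
  set S := {s | 1 < xh s}
  have hS : MeasurableSet S := measurableSet_lt measurable_const hxh
  have hn : ∀ n : ℕ, (n : ℝ≥0∞) * ∫⁻ s in S, ENNReal.ofReal (ah s) ∂μ
      ≤ liminf (fun k => ∫⁻ s, MepsE (eps k) (a k s) (v k s) (x k s) ∂μ) atTop := fun n =>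
    calc (n : ℝ≥0∞) * ∫⁻ s in S, ENNReal.ofReal (ah s) ∂μ
        = ∫⁻ s, ENNReal.ofReal (ah s * S.indicator (fun _ => (n : ℝ)) s) ∂μ := by
          rw [← lintegral_indicator hS, ← lintegral_const_mul' _ _ (ENNReal.natCast_ne_top n)]
          refine lintegral_congr fun s => ?_
          by_cases hs : s ∈ S <;> simp [hs, ENNReal.ofReal_mul', mul_comm]
      _ ≤ liminf (fun k => ∫⁻ s,
            ENNReal.ofReal (a k s * (max (x k s - 1) 0 ^ 2 / (2 * eps k))) ∂μ) atTop := by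
          refine ha.lintegral_ofReal_mul_le_liminf hai hahi ha0 hah0 (by fun_prop)
            (measurable_const.indicator hS) ?_
          filter_upwards [hlim] with s hs c hc
          by_cases hsS : s ∈ S
          · have hxs : 1 < xh s := hsS
            refine (tendsto_max_sub_one_sq_div_atTop heps heps0 (d := (xh s - 1) / 2)
              (by linarith) ?_).eventually_gt_atTop c
            exact (eventually_lt_of_coe_le_liminf hs (c := (1 + xh s) / 2) (by linarith)).mono
              fun k hk => by linarith
          · rw [indicator_of_notMem hsS] at hc
            exact Eventually.of_forall fun k => hc.trans_le (by have := heps k; positivity)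
      _ ≤ _ := liminf_le_liminf <| Eventually.of_forall fun k => lintegral_mono_ae <|
          (hv0 k).mono fun s hs => ofReal_mul_le_MepsE (heps k) hs
  have htop : Tendsto (fun n : ℕ => (n : ℝ≥0∞) * ∫⁻ s in S, ENNReal.ofReal (ah s) ∂μ) atTop
      (𝓝 ⊤) := by
    simpa [ENNReal.top_mul hpos] using
      ENNReal.Tendsto.mul_const ENNReal.tendsto_nat_nhds_top (Or.inl ENNReal.top_ne_zero)
        (b := ∫⁻ s in S, ENNReal.ofReal (ah s) ∂μ)
  exact top_le_iff.1 (le_of_tendsto' htop hn)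

end Cases

theorem statement4_general (s₀ s₁ : ℝ)
    (eps : ℕ → ℝ) (heps : ∀ k, 0 < eps k)
    (heps0 : Filter.Tendsto eps Filter.atTop (𝓝 0))
    (a v x : ℕ → ℝ → ℝ) (ah vh xh : ℝ → ℝ)
    (hmeas : ∀ k, Measurable (a k) ∧ Measurable (v k) ∧ Measurable (x k))
    (hmeash : Measurable ah ∧ Measurable vh ∧ Measurable xh)
    (hnn : ∀ k, ∀ s ∈ Set.Ioo s₀ s₁, 0 ≤ a k s ∧ 0 ≤ v k s ∧ 0 ≤ x k s)
    (hnnh : ∀ s ∈ Set.Ioo s₀ s₁, 0 ≤ ah s ∧ 0 ≤ vh s ∧ 0 ≤ xh s)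
    (hL1 : ∀ k, IntegrableOn (a k) (Set.Ioo s₀ s₁) ∧ IntegrableOn (v k) (Set.Ioo s₀ s₁))
    (hL1h : IntegrableOn ah (Set.Ioo s₀ s₁) ∧ IntegrableOn vh (Set.Ioo s₀ s₁))
    (hweak : ∀ φ : ℝ → ℝ, Measurable φ → (∃ C, ∀ s, |φ s| ≤ C) →
      Filter.Tendsto (fun k => ∫ s in Set.Ioo s₀ s₁, a k s * φ s)
          Filter.atTop (𝓝 (∫ s in Set.Ioo s₀ s₁, ah s * φ s)) ∧
      Filter.Tendsto (fun k => ∫ s in Set.Ioo s₀ s₁, v k s * φ s)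
          Filter.atTop (𝓝 (∫ s in Set.Ioo s₀ s₁, vh s * φ s)))
    (hliminf : ∀ᵐ s ∂volume, s ∈ Set.Ioo s₀ s₁ →
      ((xh s : ℝ) : EReal) ≤ Filter.liminf (fun k => ((x k s : ℝ) : EReal)) Filter.atTop) :
    ∫⁻ s in Set.Ioo s₀ s₁, M0E (ah s) (vh s) (xh s)
      ≤ Filter.liminf
          (fun k => ∫⁻ s in Set.Ioo s₀ s₁, MepsE (eps k) (a k s) (v k s) (x k s))
          Filter.atTop := by
  have hI : MeasurableSet (Ioo s₀ s₁) := measurableSet_Ioo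
  have ha0 k := ae_restrict_of_forall_mem (μ := volume) hI fun s hs => (hnn k s hs).1
  have hv0 k := ae_restrict_of_forall_mem (μ := volume) hI fun s hs => (hnn k s hs).2.1
  have hah0 := ae_restrict_of_forall_mem (μ := volume) hI fun s hs => (hnnh s hs).1
  have hvh0 := ae_restrict_of_forall_mem (μ := volume) hI fun s hs => (hnnh s hs).2.1
  have hlim := (ae_restrict_iff' hI).2 hliminf
  by_cases hnull : ∫⁻ s in {s | 1 < xh s}, ENNReal.ofReal (ah s) ∂(volume.restrict (Ioo s₀ s₁)) = 0
  · refine lintegral_M0E_le_liminf_of_ae_le_one heps (fun φ hφ hC => (hweak φ hφ hC).2)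
      (fun k => (hL1 k).2) hL1h.2 hv0 hvh0 ha0 (fun k => (hmeas k).2.2) hmeash.2.2 hlim ?_
    have hah_null := (lintegral_eq_zero_iff hmeash.1.ennreal_ofReal).1 hnull
    rw [EventuallyEq, ae_restrict_iff' (measurableSet_lt measurable_const hmeash.2.2)] at hah_null
    filter_upwards [hah_null, hah0] with s hs hs0 hne
    by_contra hx
    exact hne (le_antisymm (ENNReal.ofReal_eq_zero.1 (hs (not_le.1 hx))) hs0)
  · rw [liminf_lintegral_MepsE_eq_top heps heps0 (fun φ hφ hC => (hweak φ hφ hC).1)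
      (fun k => (hL1 k).1) hL1h.1 ha0 hah0 hv0 (fun k => (hmeas k).2.2) hmeash.2.2 hlim hnull]
    exact le_top

theorem statement4 (s₀ s₁ : ℝ) (hs : s₀ < s₁)
    (eps : ℕ → ℝ) (heps : ∀ k, 0 < eps k) (hanti : StrictAnti eps)
    (heps0 : Filter.Tendsto eps Filter.atTop (𝓝 0))
    (a v x : ℕ → ℝ → ℝ) (ah vh xh : ℝ → ℝ)
    (hmeas : ∀ k, Measurable (a k) ∧ Measurable (v k) ∧ Measurable (x k))
    (hmeash : Measurable ah ∧ Measurable vh ∧ Measurable xh)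
    (hnn : ∀ k, ∀ s ∈ Set.Ioo s₀ s₁, 0 ≤ a k s ∧ 0 ≤ v k s ∧ 0 ≤ x k s)
    (hnnh : ∀ s ∈ Set.Ioo s₀ s₁, 0 ≤ ah s ∧ 0 ≤ vh s ∧ 0 ≤ xh s)
    (hL1 : ∀ k, IntegrableOn (a k) (Set.Ioo s₀ s₁) ∧ IntegrableOn (v k) (Set.Ioo s₀ s₁))
    (hL1h : IntegrableOn ah (Set.Ioo s₀ s₁) ∧ IntegrableOn vh (Set.Ioo s₀ s₁))
    (hweak : ∀ φ : ℝ → ℝ, Measurable φ → (∃ C, ∀ s, |φ s| ≤ C) →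
      Filter.Tendsto (fun k => ∫ s in Set.Ioo s₀ s₁, a k s * φ s)
          Filter.atTop (𝓝 (∫ s in Set.Ioo s₀ s₁, ah s * φ s)) ∧
      Filter.Tendsto (fun k => ∫ s in Set.Ioo s₀ s₁, v k s * φ s)
          Filter.atTop (𝓝 (∫ s in Set.Ioo s₀ s₁, vh s * φ s)))
    (hliminf : ∀ᵐ s ∂volume, s ∈ Set.Ioo s₀ s₁ →
      ((xh s : ℝ) : EReal) ≤ Filter.liminf (fun k => ((x k s : ℝ) : EReal)) Filter.atTop) :
    ∫⁻ s in Set.Ioo s₀ s₁, M0E (ah s) (vh s) (xh s)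
      ≤ Filter.liminf
          (fun k => ∫⁻ s in Set.Ioo s₀ s₁, MepsE (eps k) (a k s) (v k s) (x k s))
          Filter.atTop :=
  statement4_general s₀ s₁ eps heps heps0 a v x ah vh xh hmeas hmeash hnn hnnh hL1 hL1h hweak
    hliminf
end
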